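/- arXiv:math/0506289 — 13 statements merged into one kernel-verified Lean document; each statement's English description precedes it below -/
import Mathlib

section
/- Let φ be a polynomial with complex coefficients of exact degree d ≥ 1, and let φ₁(z) = (φ*(0)·φ(z) − φ(0)·φ*(z))/z, where φ* denotes the conjugate polynomial of φ. Then φ is a Schur polynomial of exact degree d if and only if φ₁ is a Schur polynomial of exact degree d − 1 and |φ(0)| < |φ*(0)|. -/
open Polynomial

/-- The conjugate polynomial `φ*`: coefficients reversed and complex-conjugated. -/
noncomputable def conjPoly (p : Polynomial ℂ) : Polynomial ℂ :=
  (p.map (starRingEnd ℂ)).reverse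

/-- `φ₁(z) = (φ*(0)·φ(z) − φ(0)·φ*(z)) / z` (the numerator vanishes at `0`, so
dividing by `X` is exact and is given by `divX`). -/
noncomputable def phiStep (p : Polynomial ℂ) : Polynomial ℂ :=
  (Polynomial.C ((conjPoly p).eval 0) * p - Polynomial.C (p.eval 0) * conjPoly p).divX

/-- A Schur polynomial: all roots lie strictly inside the unit disk. -/
def IsSchur (p : Polynomial ℂ) : Prop :=
  ∀ z : ℂ, p.IsRoot z → ‖z‖ < 1

/-- A simple von Neumann polynomial: all roots lie in the closed unit disk and
every root on the unit circle is simple. -/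
def IsSimpleVonNeumann (p : Polynomial ℂ) : Prop :=
  ∀ z : ℂ, p.IsRoot z → ‖z‖ ≤ 1 ∧
    (‖z‖ = 1 → Polynomial.rootMultiplicity z p = 1)

/-!
If all roots `r` of `p` satisfy `|r| < 1`, then `|p*(z)| ≤ |p(z)|` for `|z| ≥ 1`, factor by
factor: `|z - r|² - |1 - z̄ r|² = (|z|² - 1)(1 - |r|²) ≥ 0`. Now `z φ₁(z) = φ*(0) φ(z) - φ(0) φ*(z)`
and, if `deg φ₁ = deg φ - 1`, for `z ≠ 0` also `φ₁*(z) = conj φ*(0) · φ*(z) - conj φ(0) · φ(z)`.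
At a root `w` of `φ₁` (resp. of `φ`) with `|w| ≥ 1`, the Schur property of `φ` (resp. of `φ₁`)
then gives `|φ*(0)| |v| ≤ |φ(0)| |v|` for `v = φ(w)` (resp. `v = φ*(w)`), so `v = 0` once
`|φ(0)| < |φ*(0)|`, a contradiction. For Schur `φ` of positive degree,
`|φ(0)| = |lc φ| ∏ |r| < |φ*(0)|`; and the coefficient of `X φ₁` in degree `deg φ` is
`|φ*(0)|² - |φ(0)|² ≠ 0`, which fixes `deg φ₁`.
-/

open ComplexConjugate

theorem eval_conjPoly (p : ℂ[X]) {z : ℂ} (hz : z ≠ 0) :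
    (conjPoly p).eval z = z ^ p.natDegree * conj (p.eval (conj z)⁻¹) := by
  have : Invertible z⁻¹ := invertibleOfNonzero (inv_ne_zero hz)
  have h := eval₂_reverse_mul_pow (RingHom.id ℂ) z⁻¹ (p.map conj)
  have h2 : p.eval₂ conj z⁻¹ = conj (p.eval (conj z)⁻¹) := by
    rw [← eval₂_hom, map_inv₀, Complex.conj_conj]
  simp only [invOf_eq_inv, inv_inv, natDegree_map, eval₂_map, RingHom.id_comp, h2] at h
  rw [← h, conjPoly, ← eval₂_id, mul_left_comm, ← mul_pow, mul_inv_cancel₀ hz, one_pow, mul_one]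

theorem pow_mul_conj_eval_conjPoly (p : ℂ[X]) {z : ℂ} (hz : z ≠ 0) :
    z ^ p.natDegree * conj ((conjPoly p).eval (conj z)⁻¹) = p.eval z := by
  have hcz : (conj z)⁻¹ ≠ 0 := by simpa using hz
  rw [eval_conjPoly p hcz, map_mul, map_pow, map_inv₀, Complex.conj_conj, Complex.conj_conj,
    inv_inv, ← mul_assoc, ← mul_pow, mul_inv_cancel₀ hz, one_pow, one_mul]

theorem eval_zero_conjPoly (p : ℂ[X]) : (conjPoly p).eval 0 = conj p.leadingCoeff := by
  rw [← coeff_zero_eq_eval_zero, conjPoly, coeff_zero_reverse, leadingCoeff_map]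

theorem coeff_conjPoly_natDegree (p : ℂ[X]) :
    (conjPoly p).coeff p.natDegree = conj (p.eval 0) := by
  rw [conjPoly, coeff_reverse, natDegree_map, revAt_le le_rfl, Nat.sub_self, coeff_map,
    coeff_zero_eq_eval_zero]

theorem natDegree_conjPoly_le (p : ℂ[X]) : (conjPoly p).natDegree ≤ p.natDegree :=
  (reverse_natDegree_le _).trans (natDegree_map _).le

theorem norm_one_sub_conj_mul_le {z r : ℂ} (hz : 1 ≤ ‖z‖) (hr : ‖r‖ < 1) :
    ‖1 - conj z * r‖ ≤ ‖z - r‖ := by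
  have key : ‖z - r‖ ^ 2 - ‖1 - conj z * r‖ ^ 2 = (‖z‖ ^ 2 - 1) * (1 - ‖r‖ ^ 2) := by
    simp only [← Complex.normSq_eq_norm_sq, Complex.normSq_apply, Complex.sub_re, Complex.sub_im,
      Complex.mul_re, Complex.mul_im, Complex.conj_re, Complex.conj_im, Complex.one_re,
      Complex.one_im]
    ring
  have : 0 ≤ (‖z‖ ^ 2 - 1) * (1 - ‖r‖ ^ 2) := by
    apply mul_nonneg <;> nlinarith [norm_nonneg r]
  exact (pow_le_pow_iff_left₀ (norm_nonneg _) (norm_nonneg _) two_ne_zero).mp (by linarith)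

theorem norm_eval_eq_prod_roots (p : ℂ[X]) (z : ℂ) :
    ‖p.eval z‖ = ‖p.leadingCoeff‖ * (p.roots.map fun r => ‖z - r‖).prod := by
  rw [(IsAlgClosed.splits p).eval_eq_prod_roots, norm_mul, ← normHom_apply (Multiset.prod _),
    map_multiset_prod, Multiset.map_map]
  rfl

theorem IsSchur.norm_eval_conjPoly_le {p : ℂ[X]} (hp : IsSchur p) {z : ℂ} (hz : 1 ≤ ‖z‖) :
    ‖(conjPoly p).eval z‖ ≤ ‖p.eval z‖ := by
  have hz0 : z ≠ 0 := norm_pos_iff.mp (one_pos.trans_le hz)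
  have hn : p.natDegree = Multiset.card p.roots := (IsAlgClosed.splits p).natDegree_eq_card_roots
  calc ‖(conjPoly p).eval z‖
        = ‖p.leadingCoeff‖ * (p.roots.map fun r => ‖1 - conj z * r‖).prod := by
        rw [eval_conjPoly p hz0, norm_mul, norm_pow, Complex.norm_conj, norm_eval_eq_prod_roots,
          hn, mul_left_comm, ← Multiset.prod_replicate, ← Multiset.map_const',
          ← Multiset.prod_map_mul]
        refine congrArg _ (congrArg _ (Multiset.map_congr rfl fun r _ => ?_))
        rw [← Complex.norm_conj z, ← norm_mul, mul_sub, mul_inv_cancel₀ (by simpa using hz0)]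
    _ ≤ ‖p.leadingCoeff‖ * (p.roots.map fun r => ‖z - r‖).prod := by
        gcongr
        refine Multiset.prod_map_le_prod_map₀ _ _ (fun _ _ => norm_nonneg _) fun r hr => ?_
        exact norm_one_sub_conj_mul_le hz (hp r (isRoot_of_mem_roots hr))
    _ = ‖p.eval z‖ := (norm_eval_eq_prod_roots p z).symm

theorem IsSchur.norm_eval_zero_lt {p : ℂ[X]} (hp : IsSchur p) (hn : p.natDegree ≠ 0) :
    ‖p.eval 0‖ < ‖p.leadingCoeff‖ := by
  have hp0 : p ≠ 0 := by rintro rfl; exact hn natDegree_zero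
  have hroot : ∀ r ∈ p.roots, ‖0 - r‖ < 1 := fun r hr => by
    simpa using hp r (isRoot_of_mem_roots hr)
  obtain ⟨a, ha⟩ : ∃ a, a ∈ p.roots := Multiset.card_pos_iff_exists_mem.mp <| by
    rw [← (IsAlgClosed.splits p).natDegree_eq_card_roots]; omega
  obtain ⟨t, ht⟩ := Multiset.exists_cons_of_mem ha
  have htle : (t.map fun r => ‖0 - r‖).prod ≤ 1 := by
    simpa using Multiset.prod_map_le_prod_map₀ _ (fun _ => (1 : ℝ)) (fun _ _ => norm_nonneg _)
      fun r hr => (hroot r (ht ▸ Multiset.mem_cons_of_mem hr)).le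
  have hprod : ((a ::ₘ t).map fun r => ‖0 - r‖).prod < 1 := by
    rw [Multiset.map_cons, Multiset.prod_cons]
    calc ‖0 - a‖ * _ ≤ ‖0 - a‖ * 1 := by gcongr
      _ < 1 := by simpa using hroot a ha
  rw [norm_eval_eq_prod_roots, ht]
  exact mul_lt_of_lt_one_right (norm_pos_iff.mpr (leadingCoeff_ne_zero.mpr hp0)) hprod

theorem X_mul_phiStep (p : ℂ[X]) :
    X * phiStep p = C ((conjPoly p).eval 0) * p - C (p.eval 0) * conjPoly p := by
  have h0 : (C ((conjPoly p).eval 0) * p - C (p.eval 0) * conjPoly p).coeff 0 = 0 := by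
    rw [coeff_zero_eq_eval_zero]
    simp only [eval_sub, eval_mul, eval_C]
    ring
  have h := X_mul_divX_add (C ((conjPoly p).eval 0) * p - C (p.eval 0) * conjPoly p)
  rwa [h0, C_0, add_zero] at h

theorem mul_eval_phiStep (p : ℂ[X]) (z : ℂ) :
    z * (phiStep p).eval z = (conjPoly p).eval 0 * p.eval z - p.eval 0 * (conjPoly p).eval z := by
  simpa using congrArg (eval z) (X_mul_phiStep p)

theorem eval_conjPoly_phiStep {p : ℂ[X]} (hdeg : (phiStep p).natDegree + 1 = p.natDegree)
    {z : ℂ} (hz : z ≠ 0) :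
    (conjPoly (phiStep p)).eval z
      = conj ((conjPoly p).eval 0) * (conjPoly p).eval z - conj (p.eval 0) * p.eval z := by
  set u := (conj z)⁻¹
  have hzu : z * conj u = 1 := by simp [u, hz]
  calc (conjPoly (phiStep p)).eval z
        = z ^ p.natDegree * conj (u * (phiStep p).eval u) := by
        rw [eval_conjPoly _ hz, ← hdeg, map_mul, pow_succ]
        linear_combination (-(z ^ (phiStep p).natDegree * conj ((phiStep p).eval u))) * hzu
    _ = _ := by
        rw [mul_eval_phiStep, eval_conjPoly p hz, ← pow_mul_conj_eval_conjPoly p hz]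
        simp only [map_sub, map_mul]
        ring

theorem degree_phiStep {p : ℂ[X]} (h : ‖p.eval 0‖ < ‖p.leadingCoeff‖) :
    (phiStep p).degree = (p.natDegree - 1 : ℕ) := by
  set ψ := C ((conjPoly p).eval 0) * p - C (p.eval 0) * conjPoly p
  have hcoeff : ψ.coeff p.natDegree = ((‖p.leadingCoeff‖ ^ 2 - ‖p.eval 0‖ ^ 2 : ℝ) : ℂ) := by
    simp only [ψ, coeff_sub, coeff_C_mul, coeff_conjPoly_natDegree, eval_zero_conjPoly,
      coeff_natDegree, Complex.ofReal_sub, Complex.ofReal_pow]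
    rw [mul_comm, Complex.mul_conj', Complex.mul_conj']
  have hne : ψ.coeff p.natDegree ≠ 0 := by
    rw [hcoeff, Complex.ofReal_ne_zero]
    nlinarith [norm_nonneg (p.eval 0)]
  have hψ : ψ.natDegree = p.natDegree := by
    refine le_antisymm ((natDegree_sub_le _ _).trans (max_le ?_ ?_)) (le_natDegree_of_ne_zero hne)
    · exact natDegree_C_mul_le _ _
    · exact (natDegree_C_mul_le _ _).trans (natDegree_conjPoly_le p)
  have hφ0 : phiStep p ≠ 0 := fun h0 => by
    have hψ0 : ψ = 0 := by simp only [ψ, ← X_mul_phiStep p, h0, mul_zero]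
    exact hne (by rw [hψ0, coeff_zero])
  rw [degree_eq_natDegree hφ0, phiStep, natDegree_divX_eq_natDegree_tsub_one, hψ]

theorem IsSchur.isSchur_phiStep {p : ℂ[X]} (hp : IsSchur p)
    (h : ‖p.eval 0‖ < ‖p.leadingCoeff‖) : IsSchur (phiStep p) := by
  intro w hw
  by_contra! hw1
  have hpw : 0 < ‖p.eval w‖ := norm_pos_iff.mpr fun h0 => (hp w h0).not_ge hw1
  have hrel := mul_eval_phiStep p w
  rw [hw.eq_zero, mul_zero, eq_comm, sub_eq_zero, eval_zero_conjPoly] at hrel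
  have hnorm := congrArg norm hrel
  rw [norm_mul, norm_mul, Complex.norm_conj] at hnorm
  have hle := hp.norm_eval_conjPoly_le hw1
  nlinarith [norm_nonneg (p.eval 0)]

theorem isSchur_of_isSchur_phiStep {p : ℂ[X]} (h₁ : IsSchur (phiStep p))
    (hdeg : (phiStep p).natDegree + 1 = p.natDegree) (h : ‖p.eval 0‖ < ‖p.leadingCoeff‖) :
    IsSchur p := by
  intro w hw
  by_contra! hw1
  have hw0 : w ≠ 0 := norm_pos_iff.mp (one_pos.trans_le hw1)
  have hφ₁ : 0 < ‖(phiStep p).eval w‖ := norm_pos_iff.mpr fun h0 => (h₁ w h0).not_ge hw1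
  have hrel := congrArg norm (mul_eval_phiStep p w)
  have hle := h₁.norm_eval_conjPoly_le hw1
  rw [hw.eq_zero, mul_zero, zero_sub, norm_neg, norm_mul, norm_mul] at hrel
  rw [eval_conjPoly_phiStep hdeg hw0, hw.eq_zero, mul_zero, sub_zero, eval_zero_conjPoly,
    Complex.conj_conj, norm_mul] at hle
  have hx : ‖(conjPoly p).eval w‖ = 0 := by
    nlinarith [norm_nonneg ((conjPoly p).eval w), mul_nonneg (sub_nonneg.2 hw1) hφ₁.le]
  rw [hx, mul_zero] at hrel
  exact (mul_pos (one_pos.trans_le hw1) hφ₁).ne' hrel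

/-- Theorem 1 (Schur step): `φ` of exact degree `d ≥ 1` is a Schur polynomial iff
`φ₁` is a Schur polynomial of exact degree `d − 1` and `|φ(0)| < |φ*(0)|`. -/
theorem schur_step (φ : Polynomial ℂ) (d : ℕ) (hd : 1 ≤ d) (hdeg : φ.degree = d) :
    IsSchur φ ↔
      (IsSchur (phiStep φ) ∧ (phiStep φ).degree = (d - 1 : ℕ) ∧
        ‖φ.eval 0‖ < ‖(conjPoly φ).eval 0‖) := by
  have hn : φ.natDegree = d := natDegree_eq_of_degree_eq_some hdeg
  rw [eval_zero_conjPoly, Complex.norm_conj]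
  constructor
  · intro hφ
    have h := hφ.norm_eval_zero_lt (by omega)
    exact ⟨hφ.isSchur_phiStep h, hn ▸ degree_phiStep h, h⟩
  · rintro ⟨h₁, h₂, h⟩
    refine isSchur_of_isSchur_phiStep h₁ ?_ h
    rw [natDegree_eq_of_degree_eq_some h₂]
    omega
end

section
/- Let δ > 0, ε′ > 1 and 0 < q < 4 be real numbers. Then the Debye–Joseph et al. characteristic polynomial φ₀(Z) = (1 + δε′)Z³ − (3 + δε′ − (1 + δ)q)Z² + (3 − δε′ − (1 − δ)q)Z − (1 − δε′) is a Schur polynomial. -/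
open Polynomial

/-!
The Cayley transform `w = (z - 1) / (z + 1)` maps the open unit disk onto the open left
half-plane, and turns a real cubic `p(z) = a₃ z³ + a₂ z² + a₁ z + a₀` into the real cubic
`(1 - w)³ p(z) = A₃ w³ + A₂ w² + A₁ w + A₀`. So `p` is Schur as soon as the transformed
cubic is Hurwitz stable, which is the Routh–Hurwitz condition: positive coefficients and
`A₀ A₃ < A₁ A₂`. For `φ₀` one finds `A₃ = 8 - 2q`, `A₂ = 8δε' - 2δq`, `A₁ = 2q`,
`A₀ = 2δq`, and `A₀ A₃ < A₁ A₂` reduces to `ε' > 1`.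
-/

/-- Routh–Hurwitz criterion for real cubics. -/
theorem re_neg_of_cubic_eq_zero {A₀ A₁ A₂ A₃ : ℝ} (h₀ : 0 < A₀) (h₁ : 0 < A₁) (h₂ : 0 < A₂)
    (h₃ : 0 < A₃) (hRH : A₀ * A₃ < A₁ * A₂) {w : ℂ}
    (hw : (A₃ : ℂ) * w ^ 3 + A₂ * w ^ 2 + A₁ * w + A₀ = 0) :
    w.re < 0 := by
  set x := w.re
  set y := w.im
  have hre := congrArg Complex.re hw
  have him := congrArg Complex.im hw
  simp only [Complex.add_re, Complex.add_im, Complex.mul_re, Complex.mul_im,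
    Complex.ofReal_re, Complex.ofReal_im, Complex.zero_re, Complex.zero_im,
    pow_succ, pow_zero, Complex.one_re, Complex.one_im] at hre him
  by_contra! hx
  have hre' : A₃ * (x ^ 3 - 3 * x * y ^ 2) + A₂ * (x ^ 2 - y ^ 2) + A₁ * x + A₀ = 0 := by
    linear_combination hre
  have him' : y * (A₃ * (3 * x ^ 2 - y ^ 2) + 2 * A₂ * x + A₁) = 0 := by
    linear_combination him
  rcases mul_eq_zero.mp him' with hy | hy
  · rw [hy] at hre'
    nlinarith [mul_nonneg (mul_nonneg hx hx) hx, mul_nonneg hx hx]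
  · -- eliminating `y²` leaves a cubic in `x` all of whose coefficients are negative
    have hx_cubic : -8 * A₃ ^ 2 * x ^ 3 - 8 * A₂ * A₃ * x ^ 2 - 2 * (A₁ * A₃ + A₂ ^ 2) * x
        + (A₀ * A₃ - A₁ * A₂) = 0 := by
      linear_combination A₃ * hre' - (3 * A₃ * x + A₂) * hy
    nlinarith [mul_nonneg (mul_nonneg hx hx) hx, mul_nonneg hx hx,
      mul_pos h₁ h₃, mul_pos h₂ h₃, sq_nonneg A₂, sq_nonneg A₃]

theorem Complex.re_cayley (z : ℂ) :
    ((z - 1) / (z + 1)).re = (Complex.normSq z - 1) / Complex.normSq (z + 1) := by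
  rw [Complex.div_re, ← add_div]
  simp only [Complex.sub_re, Complex.add_re, Complex.sub_im, Complex.add_im,
    Complex.one_re, Complex.one_im, Complex.normSq_apply]
  ring_nf

theorem Complex.norm_lt_one_of_re_cayley_neg {z : ℂ} (h : ((z - 1) / (z + 1)).re < 0) :
    ‖z‖ < 1 := by
  rw [Complex.re_cayley, div_neg_iff] at h
  have hnormSq : Complex.normSq z < 1 := by
    rcases h with ⟨-, hden⟩ | ⟨hnum, -⟩
    · exact absurd hden (Complex.normSq_nonneg _).not_gt
    · linarith
  rw [← Complex.sq_norm] at hnormSq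
  nlinarith [norm_nonneg z]

theorem norm_lt_one_of_cubic_eq_zero {a₀ a₁ a₂ a₃ : ℝ}
    (h₀ : 0 < a₃ + a₂ + a₁ + a₀) (h₁ : 0 < 3 * a₃ + a₂ - a₁ - 3 * a₀)
    (h₂ : 0 < 3 * a₃ - a₂ - a₁ + 3 * a₀) (h₃ : 0 < a₃ - a₂ + a₁ - a₀)
    (hRH : (a₃ + a₂ + a₁ + a₀) * (a₃ - a₂ + a₁ - a₀)
      < (3 * a₃ + a₂ - a₁ - 3 * a₀) * (3 * a₃ - a₂ - a₁ + 3 * a₀))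
    {z : ℂ} (hz : (a₃ : ℂ) * z ^ 3 + a₂ * z ^ 2 + a₁ * z + a₀ = 0) :
    ‖z‖ < 1 := by
  have hz₁ : z + 1 ≠ 0 := by
    intro h
    rw [eq_neg_of_add_eq_zero_left h] at hz
    have : ((a₃ - a₂ + a₁ - a₀ : ℝ) : ℂ) = 0 := by push_cast; linear_combination -hz
    exact h₃.ne' (mod_cast this)
  refine Complex.norm_lt_one_of_re_cayley_neg (re_neg_of_cubic_eq_zero h₀ h₁ h₂ h₃ hRH ?_)
  field_simp
  push_cast
  linear_combination 8 * hz

/-- Debye–Joseph et al.: for `δ > 0`, `ε′ > 1` and `0 < q < 4` the characteristic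
polynomial is a Schur polynomial. -/
theorem debye_joseph_schur (δ ε' q : ℝ) (hδ : 0 < δ) (hε : 1 < ε')
    (hq0 : 0 < q) (hq4 : q < 4) :
    IsSchur (Polynomial.C ((1 + δ * ε' : ℝ) : ℂ) * Polynomial.X ^ 3
      - Polynomial.C ((3 + δ * ε' - (1 + δ) * q : ℝ) : ℂ) * Polynomial.X ^ 2
      + Polynomial.C ((3 - δ * ε' - (1 - δ) * q : ℝ) : ℂ) * Polynomial.X
      - Polynomial.C ((1 - δ * ε' : ℝ) : ℂ)) := by
  intro z hz
  simp only [IsRoot, eval_sub, eval_add, eval_mul, eval_pow, eval_C, eval_X] at hz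
  refine norm_lt_one_of_cubic_eq_zero (a₃ := 1 + δ * ε') (a₂ := -(3 + δ * ε' - (1 + δ) * q))
    (a₁ := 3 - δ * ε' - (1 - δ) * q) (a₀ := -(1 - δ * ε')) ?_ ?_ ?_ ?_ ?_ ?_
  · nlinarith
  · nlinarith
  · nlinarith
  · linarith
  · nlinarith [mul_pos (mul_pos hq0 hδ) (sub_pos.mpr hε)]
  · push_cast at hz ⊢
    linear_combination hz
end

section
/- Let δ > 0 and 0 < q < 4 be real numbers. Then the polynomial φ₀(Z) = (1 + δ)Z³ − (3 + δ − (1 + δ)q)Z² + (3 − δ − (1 − δ)q)Z − (1 − δ) (the Debye–Joseph et al. characteristic polynomial with ε′ = 1, i.e. ε_s = ε_∞) is a simple von Neumann polynomial. -/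
open Polynomial

/-!
`φ₀` factors as `((1 + δ) Z - (1 - δ)) (Z² - (2 - q) Z + 1)`. The linear factor has its root
`(1 - δ)/(1 + δ)` strictly inside the unit disk. Since `|2 - q| < 2`, the quadratic factor has a
negative discriminant, so its roots are two distinct complex conjugates whose product is `1`: they
lie on the unit circle and are simple.
-/

namespace Polynomial

theorem rootMultiplicity_eq_one_of_not_isRoot_derivative {R : Type*} [CommRing R] {p : R[X]}
    {z : R} (hp : p.IsRoot z) (hp' : ¬ p.derivative.IsRoot z) : p.rootMultiplicity z = 1 := by
  have hp0 : p ≠ 0 := by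
    rintro rfl
    simp at hp'
  have hpos : 0 < p.rootMultiplicity z := (rootMultiplicity_pos hp0).2 hp
  have hle : ¬ 1 < p.rootMultiplicity z := fun h =>
    hp' ((one_lt_rootMultiplicity_iff_isRoot hp0).1 h).2
  omega

end Polynomial

theorem IsSchur.ne_zero {p : ℂ[X]} (hp : IsSchur p) : p ≠ 0 := by
  rintro rfl
  simpa using hp 1

theorem IsSimpleVonNeumann.ne_zero {p : ℂ[X]} (hp : IsSimpleVonNeumann p) : p ≠ 0 := by
  rintro rfl
  have := (hp 2 (by simp)).1
  norm_num at this

theorem IsSchur.mul_isSimpleVonNeumann {p r : ℂ[X]} (hp : IsSchur p)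
    (hr : IsSimpleVonNeumann r) : IsSimpleVonNeumann (p * r) := by
  intro z hz
  rcases root_mul.1 hz with hpz | hrz
  · exact ⟨(hp z hpz).le, fun h => absurd h (hp z hpz).ne⟩
  · refine ⟨(hr z hrz).1, fun hz1 => ?_⟩
    have hpz : ¬ p.IsRoot z := fun hpz => (hp z hpz).ne hz1
    rw [rootMultiplicity_mul (mul_ne_zero hp.ne_zero hr.ne_zero), rootMultiplicity_eq_zero hpz,
      (hr z hrz).2 hz1, zero_add]

theorem isSchur_C_mul_X_sub_C {a b : ℂ} (hab : ‖b‖ < ‖a‖) : IsSchur (C a * X - C b) := by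
  intro z hz
  have haz : a * z = b := by simpa [sub_eq_zero] using hz
  have ha : 0 < ‖a‖ := (norm_nonneg b).trans_lt hab
  have : ‖a‖ * ‖z‖ < ‖a‖ * 1 := by rw [← norm_mul, haz, mul_one]; exact hab
  exact lt_of_mul_lt_mul_left this ha.le

section Quadratic

variable {c : ℝ} {z : ℂ}

theorem Complex.im_ne_zero_of_sq_sub_mul_add_one_eq_zero (hc : |c| < 2)
    (hz : z ^ 2 - c * z + 1 = 0) : z.im ≠ 0 := by
  intro him
  have hre : z.re ^ 2 - c * z.re + 1 = 0 := by
    simpa [pow_two, him] using congrArg Complex.re hz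
  have hc2 : c ^ 2 < 4 := by nlinarith [abs_lt.1 hc]
  nlinarith [sq_nonneg (2 * z.re - c)]

theorem Complex.norm_eq_one_of_sq_sub_mul_add_one_eq_zero (hc : |c| < 2)
    (hz : z ^ 2 - c * z + 1 = 0) : ‖z‖ = 1 := by
  have him := Complex.im_ne_zero_of_sq_sub_mul_add_one_eq_zero hc hz
  have h_re : z.re ^ 2 - z.im ^ 2 - c * z.re + 1 = 0 := by
    simpa [pow_two] using congrArg Complex.re hz
  have h_im : z.im * (2 * z.re - c) = 0 := by
    have := congrArg Complex.im hz
    simp only [pow_two, Complex.sub_im, Complex.add_im, Complex.mul_im, Complex.ofReal_re,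
      Complex.ofReal_im, Complex.one_im, Complex.zero_im] at this
    linarith
  have hre : 2 * z.re = c := by linarith [(mul_eq_zero.1 h_im).resolve_left him]
  have hsq : ‖z‖ ^ 2 = 1 := by
    rw [Complex.sq_norm, Complex.normSq_apply]
    linear_combination -h_re + z.re * hre
  exact (pow_eq_one_iff_of_nonneg (norm_nonneg z) two_ne_zero).1 hsq

theorem isSimpleVonNeumann_X_sq_sub_C_mul_X_add_one (hc : |c| < 2) :
    IsSimpleVonNeumann (X ^ 2 - C (c : ℂ) * X + 1) := by
  intro z hz
  have hz' : z ^ 2 - c * z + 1 = 0 := by simpa using hz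
  have hnorm := Complex.norm_eq_one_of_sq_sub_mul_add_one_eq_zero hc hz'
  refine ⟨hnorm.le, fun _ => rootMultiplicity_eq_one_of_not_isRoot_derivative hz fun hd => ?_⟩
  have him : (2 * z - c).im = 0 := by simpa [derivative_X_sq] using congrArg Complex.im hd
  exact Complex.im_ne_zero_of_sq_sub_mul_add_one_eq_zero hc hz' (by simpa using him)

end Quadratic

/-- Debye–Joseph et al. with `ε_s = ε_∞`: for `δ > 0` and `0 < q < 4` the
characteristic polynomial is a simple von Neumann polynomial. -/
theorem debye_joseph_vonNeumann_eps_eq (δ q : ℝ) (hδ : 0 < δ)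
    (hq0 : 0 < q) (hq4 : q < 4) :
    IsSimpleVonNeumann (Polynomial.C ((1 + δ : ℝ) : ℂ) * Polynomial.X ^ 3
      - Polynomial.C ((3 + δ - (1 + δ) * q : ℝ) : ℂ) * Polynomial.X ^ 2
      + Polynomial.C ((3 - δ - (1 - δ) * q : ℝ) : ℂ) * Polynomial.X
      - Polynomial.C ((1 - δ : ℝ) : ℂ)) := by
  have hfactor : C ((1 + δ : ℝ) : ℂ) * X ^ 3 - C ((3 + δ - (1 + δ) * q : ℝ) : ℂ) * X ^ 2
      + C ((3 - δ - (1 - δ) * q : ℝ) : ℂ) * X - C ((1 - δ : ℝ) : ℂ)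
      = (C ((1 + δ : ℝ) : ℂ) * X - C ((1 - δ : ℝ) : ℂ))
        * (X ^ 2 - C ((2 - q : ℝ) : ℂ) * X + 1) := by
    simp only [Complex.ofReal_add, Complex.ofReal_sub, Complex.ofReal_mul, Complex.ofReal_one,
      Complex.ofReal_ofNat, map_add, map_sub, map_mul, map_one, map_ofNat]
    ring
  rw [hfactor]
  refine IsSchur.mul_isSimpleVonNeumann (isSchur_C_mul_X_sub_C ?_)
    (isSimpleVonNeumann_X_sq_sub_C_mul_X_add_one (abs_lt.2 ⟨by linarith, by linarith⟩))
  rw [Complex.norm_real, Complex.norm_real, Real.norm_eq_abs, Real.norm_eq_abs,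
    abs_of_pos (by linarith : (0 : ℝ) < 1 + δ)]
  exact abs_lt.2 ⟨by linarith, by linarith⟩
end

section
/- Let δ > 0, λ > 0 and ξ ∈ ℝ satisfy 4λ²sin²(ξ/2) = 4, and let G be the 3 × 3 complex matrix with rows (1, −λ(e^{iξ} − 1), 0), (−λ(1 − e^{−iξ}), (1 − δ + (1 + δ)λ²(e^{iξ} − 2 + e^{−iξ}))/(1 + δ), 2δ/(1 + δ)), and (−λ(1 − e^{−iξ}), λ²(e^{iξ} − 2 + e^{−iξ}), 1). Then the powers of G are not uniformly bounded: there is no constant C with ‖Gⁿ‖ ≤ C for all n. -/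
attribute [local instance] Matrix.frobeniusNormedAddCommGroup

/-!
At `q = 4` the amplification matrix has `-1` as a defective eigenvalue: with
`a = λ (e^{iξ} - 1)`, the vectors `v = (2a, 4, 4)` and `u = (a, 0, 0)` satisfy
`G v = -v` and `G u = -u + v`, so `Gⁿ u = (-1)ⁿ u + n (-1)ⁿ⁻¹ v` grows linearly in `n`.
Both identities reduce to `λ² (e^{iξ} - 2 + e^{-iξ}) = -q = -4`.
-/

open Matrix WithLp

theorem Complex.exp_mul_I_sub_two_add_exp_neg_mul_I (z : ℂ) :
    exp (z * I) - 2 + exp (-z * I) = -4 * sin (z / 2) ^ 2 := by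
  have hcos := cos_two_mul_eq_one_sub (z / 2)
  rw [mul_div_cancel₀ z two_ne_zero] at hcos
  linear_combination -(two_cos z) + 2 * hcos

namespace Matrix

section JordanChain

variable {K : Type*} [CommRing K] {ι : Type*} [Fintype ι] [DecidableEq ι]

theorem pow_mulVec_of_jordan_chain {G : Matrix ι ι K} {μ : K} {u v : ι → K}
    (hv : G *ᵥ v = μ • v) (hu : G *ᵥ u = μ • u + v) (n : ℕ) :
    G ^ n *ᵥ u = μ ^ n • u + ((n : K) * μ ^ (n - 1)) • v := by
  induction n with
  | zero => simp
  | succ n ih =>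
    have hpow : (n : K) * μ ^ (n - 1) * μ = n * μ ^ n := by
      cases n <;> simp [pow_succ, mul_assoc]
    rw [pow_succ', ← mulVec_mulVec, ih, mulVec_add, mulVec_smul, mulVec_smul, hu, hv,
      smul_add, smul_smul, smul_smul, hpow, add_assoc, ← add_smul, Nat.add_sub_cancel,
      ← pow_succ]
    congr 2
    push_cast
    ring

end JordanChain

section Frobenius

variable {𝕜 : Type*} [RCLike 𝕜] {ι : Type*} [Fintype ι]

theorem frobenius_norm_mulVec_le {κ : Type*} [Fintype κ] (A : Matrix ι κ 𝕜)
    (u : κ → 𝕜) : ‖toLp 2 (A *ᵥ u)‖ ≤ ‖A‖ * ‖toLp 2 u‖ := by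
  simpa only [← frobenius_norm_replicateCol (ι := Unit), replicateCol_mulVec] using
    frobenius_norm_mul A (replicateCol Unit u)

theorem not_exists_forall_frobenius_norm_pow_le_of_jordan_chain [DecidableEq ι]
    {G : Matrix ι ι 𝕜} {μ : 𝕜} (hμ : ‖μ‖ = 1) {u v : ι → 𝕜} (hv0 : v ≠ 0)
    (hv : G *ᵥ v = μ • v) (hu : G *ᵥ u = μ • u + v) :
    ¬ ∃ C : ℝ, ∀ n : ℕ, ‖G ^ n‖ ≤ C := by
  rintro ⟨C, hC⟩
  have hgrowth (n : ℕ) : n * ‖toLp 2 v‖ - ‖toLp 2 u‖ ≤ C * ‖toLp 2 u‖ := calc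
    n * ‖toLp 2 v‖ - ‖toLp 2 u‖
        = ‖((n : 𝕜) * μ ^ (n - 1)) • toLp 2 v‖ - ‖μ ^ n • toLp 2 u‖ := by
          simp [norm_smul, hμ]
      _ ≤ ‖toLp 2 (G ^ n *ᵥ u)‖ := by
          rw [pow_mulVec_of_jordan_chain hv hu, toLp_add, toLp_smul, toLp_smul, add_comm]
          exact norm_sub_le_norm_add _ _
      _ ≤ ‖G ^ n‖ * ‖toLp 2 u‖ := frobenius_norm_mulVec_le _ _
      _ ≤ C * ‖toLp 2 u‖ := by gcongr; exact hC n
  have hv : 0 < ‖toLp 2 v‖ := by simpa using hv0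
  obtain ⟨n, hn⟩ := exists_nat_gt ((C + 1) * ‖toLp 2 u‖ / ‖toLp 2 v‖)
  rw [div_lt_iff₀ hv] at hn
  linarith [hgrowth n]

end Frobenius

end Matrix

/-- `c` and `c'` stand for `e^{iξ}` and `e^{-iξ}`. -/
def josephMatrix {K : Type*} [Field K] (δ lam c c' : K) : Matrix (Fin 3) (Fin 3) K :=
  !![1, -lam * (c - 1), 0;
     -lam * (1 - c'), (1 - δ + (1 + δ) * lam ^ 2 * (c - 2 + c')) / (1 + δ), 2 * δ / (1 + δ);
     -lam * (1 - c'), lam ^ 2 * (c - 2 + c'), 1]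

section JosephMatrix

variable {K : Type*} [Field K] {δ lam c c' : K}

theorem josephMatrix_mulVec (x y z : K) :
    josephMatrix δ lam c c' *ᵥ ![x, y, z] =
      ![x - lam * (c - 1) * y,
        -lam * (1 - c') * x + (1 - δ + (1 + δ) * lam ^ 2 * (c - 2 + c')) / (1 + δ) * y +
          2 * δ / (1 + δ) * z,
        -lam * (1 - c') * x + lam ^ 2 * (c - 2 + c') * y + z] := by
  ext i
  fin_cases i <;> simp [josephMatrix, mulVec, dotProduct, Fin.sum_univ_three, sub_eq_add_neg]

theorem josephMatrix_mulVec_eigenvector (hδ : 1 + δ ≠ 0) (hcc : c * c' = 1)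
    (hs : lam ^ 2 * (c - 2 + c') = -4) :
    josephMatrix δ lam c c' *ᵥ ![2 * (lam * (c - 1)), 4, 4] =
      (-1 : K) • ![2 * (lam * (c - 1)), 4, 4] := by
  simp only [josephMatrix_mulVec, smul_cons, smul_empty, smul_eq_mul, vecCons_inj, and_true]
  refine ⟨by ring, ?_, by linear_combination 2 * hs + 2 * lam ^ 2 * hcc⟩
  field_simp
  linear_combination 2 * (1 + δ) * hs + 2 * (1 + δ) * lam ^ 2 * hcc

theorem josephMatrix_mulVec_generalized_eigenvector (hcc : c * c' = 1)
    (hs : lam ^ 2 * (c - 2 + c') = -4) :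
    josephMatrix δ lam c c' *ᵥ ![lam * (c - 1), 0, 0] =
      (-1 : K) • ![lam * (c - 1), 0, 0] + ![2 * (lam * (c - 1)), 4, 4] := by
  simp only [josephMatrix_mulVec, smul_cons, smul_empty, smul_eq_mul, cons_add_cons,
    empty_add_empty, vecCons_inj, and_true]
  refine ⟨by ring, ?_, ?_⟩ <;> linear_combination -hs + lam ^ 2 * hcc

end JosephMatrix

theorem debye_joseph_unstable_general (δ lam ξ : ℝ) (hδ : 0 < δ)
    (hq : 4 * lam ^ 2 * Real.sin (ξ / 2) ^ 2 = 4) :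
    ¬ ∃ C : ℝ, ∀ n : ℕ,
      ‖(!![1, -(lam : ℂ) * (Complex.exp (ξ * Complex.I) - 1), 0;
          -(lam : ℂ) * (1 - Complex.exp (-ξ * Complex.I)),
            (1 - (δ : ℂ) + (1 + (δ : ℂ)) * (lam : ℂ) ^ 2 *
                (Complex.exp (ξ * Complex.I) - 2 + Complex.exp (-ξ * Complex.I))) /
              (1 + (δ : ℂ)),
            2 * (δ : ℂ) / (1 + (δ : ℂ));
          -(lam : ℂ) * (1 - Complex.exp (-ξ * Complex.I)),
            (lam : ℂ) ^ 2 *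
              (Complex.exp (ξ * Complex.I) - 2 + Complex.exp (-ξ * Complex.I)),
            1] : Matrix (Fin 3) (Fin 3) ℂ) ^ n‖ ≤ C := by
  have hδ' : 1 + (δ : ℂ) ≠ 0 := by exact_mod_cast (by linarith : (1 + δ : ℝ) > 0).ne'
  have hcc : Complex.exp (ξ * Complex.I) * Complex.exp (-ξ * Complex.I) = 1 := by
    rw [← Complex.exp_add]; simp
  have hs : (lam : ℂ) ^ 2 *
      (Complex.exp (ξ * Complex.I) - 2 + Complex.exp (-ξ * Complex.I)) = -4 := by
    have hq' : ((4 * lam ^ 2 * Real.sin (ξ / 2) ^ 2 : ℝ) : ℂ) = 4 := by exact_mod_cast hq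
    push_cast at hq'
    rw [Complex.exp_mul_I_sub_two_add_exp_neg_mul_I]
    linear_combination -hq'
  have hv0 : ![2 * ((lam : ℂ) * (Complex.exp (ξ * Complex.I) - 1)), 4, 4] ≠ 0 :=
    fun h => by simpa using congrFun h 2
  exact not_exists_forall_frobenius_norm_pow_le_of_jordan_chain (by simp) hv0
    (josephMatrix_mulVec_eigenvector hδ' hcc hs)
    (josephMatrix_mulVec_generalized_eigenvector hcc hs)

/-- Instability of the Debye–Joseph et al. amplification matrix when
`ε_s = ε_∞` and `q = 4λ²sin²(ξ/2) = 4`: the powers of `G` are not uniformly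
bounded. -/
theorem debye_joseph_unstable (δ lam ξ : ℝ) (hδ : 0 < δ) (hlam : 0 < lam)
    (hq : 4 * lam ^ 2 * Real.sin (ξ / 2) ^ 2 = 4) :
    ¬ ∃ C : ℝ, ∀ n : ℕ,
      ‖(!![1, -(lam : ℂ) * (Complex.exp (ξ * Complex.I) - 1), 0;
          -(lam : ℂ) * (1 - Complex.exp (-ξ * Complex.I)),
            (1 - (δ : ℂ) + (1 + (δ : ℂ)) * (lam : ℂ) ^ 2 *
                (Complex.exp (ξ * Complex.I) - 2 + Complex.exp (-ξ * Complex.I))) /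
              (1 + (δ : ℂ)),
            2 * (δ : ℂ) / (1 + (δ : ℂ));
          -(lam : ℂ) * (1 - Complex.exp (-ξ * Complex.I)),
            (lam : ℂ) ^ 2 *
              (Complex.exp (ξ * Complex.I) - 2 + Complex.exp (-ξ * Complex.I)),
            1] : Matrix (Fin 3) (Fin 3) ℂ) ^ n‖ ≤ C :=
  debye_joseph_unstable_general δ lam ξ hδ hq
end

section
/- Let 0 < δ < 1, α > 0 and 0 < q ≤ 4 be real numbers. Then the Debye–Young characteristic polynomial φ₀(Z) = (1 + δα)(1 + δ)Z³ − (3 + δ + δα + 3δ²α − (1 + δ)q)Z² + (3 − δ − δα + 3δ²α − (1 − δ)q)Z − (1 − δα)(1 − δ) is a Schur polynomial. -/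
open Polynomial

/-!
The Cayley transform `w = (z - 1) / (z + 1)` maps the open unit disk onto the open left
half-plane, and `(z + 1)³ ψ(w) = 4 φ₀(z)` for the real cubic
`ψ(w) = (4 + 4δ²α - q) w³ + δ(4 + 4α - q) w² + q w + δq`.
Its coefficients are positive and satisfy the Routh–Hurwitz inequality
`q · δ(4 + 4α - q) - δq · (4 + 4δ²α - q) = 4qδα(1 - δ²) > 0`, so every root of `ψ` has negative
real part (split `ψ(w) = 0` into real and imaginary parts), i.e. every root of `φ₀` lies in the
open unit disk.
-/

theorem Complex.re_neg_of_cubic_eq_zero {a₃ a₂ a₁ a₀ : ℝ} (h₃ : 0 < a₃) (h₂ : 0 < a₂)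
    (h₁ : 0 < a₁) (h₀ : 0 < a₀) (hH : a₀ * a₃ < a₁ * a₂) {w : ℂ}
    (hw : a₃ * w ^ 3 + a₂ * w ^ 2 + a₁ * w + a₀ = 0) : w.re < 0 := by
  obtain ⟨x, y⟩ := w
  have hre := congrArg Complex.re hw
  have him := congrArg Complex.im hw
  simp only [pow_succ, pow_zero, one_mul, Complex.add_re, Complex.add_im, Complex.mul_re,
    Complex.mul_im, Complex.ofReal_re, Complex.ofReal_im, Complex.zero_re,
    Complex.zero_im] at hre him
  have Hre : a₃ * (x ^ 3 - 3 * x * y ^ 2) + a₂ * (x ^ 2 - y ^ 2) + a₁ * x + a₀ = 0 := by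
    linear_combination hre
  have Him : y * (a₃ * (3 * x ^ 2 - y ^ 2) + 2 * a₂ * x + a₁) = 0 := by
    linear_combination him
  show x < 0
  by_contra! hx
  rcases eq_or_ne y 0 with rfl | hy
  · nlinarith [mul_nonneg h₃.le (pow_nonneg hx 3), mul_nonneg h₂.le (sq_nonneg x),
      mul_nonneg h₁.le hx]
  · have hy2 := (mul_eq_zero.mp Him).resolve_left hy
    -- eliminating `y ^ 2` leaves a cubic in `x` with positive coefficients,
    -- the constant one by `hH`
    have hx3 : 8 * a₃ ^ 2 * x ^ 3 + 8 * a₂ * a₃ * x ^ 2 + 2 * (a₁ * a₃ + a₂ ^ 2) * x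
        + (a₁ * a₂ - a₀ * a₃) = 0 := by
      linear_combination (3 * a₃ * x + a₂) * hy2 - a₃ * Hre
    nlinarith [mul_nonneg (sq_nonneg a₃) (pow_nonneg hx 3),
      mul_nonneg (mul_pos h₂ h₃).le (sq_nonneg x), mul_nonneg (mul_pos h₁ h₃).le hx,
      mul_nonneg (sq_nonneg a₂) hx]

theorem Complex.norm_lt_one_of_cayley_cubic_eq_zero {a₃ a₂ a₁ a₀ : ℝ} (h₃ : 0 < a₃)
    (h₂ : 0 < a₂) (h₁ : 0 < a₁) (h₀ : 0 < a₀) (hH : a₀ * a₃ < a₁ * a₂) {z : ℂ}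
    (hz : a₃ * (z - 1) ^ 3 + a₂ * (z - 1) ^ 2 * (z + 1) + a₁ * (z - 1) * (z + 1) ^ 2
      + a₀ * (z + 1) ^ 3 = 0) : ‖z‖ < 1 := by
  have hz1 : z + 1 ≠ 0 := by
    intro h
    obtain rfl : z = -1 := eq_neg_of_add_eq_zero_left h
    norm_num at hz
    exact h₃.ne' (by exact_mod_cast hz)
  apply Complex.norm_lt_one_of_re_cayley_neg
  apply Complex.re_neg_of_cubic_eq_zero h₃ h₂ h₁ h₀ hH
  set w := (z - 1) / (z + 1)
  have hwz : w * (z + 1) = z - 1 := div_mul_cancel₀ _ hz1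
  refine (mul_eq_zero.mp ?_).resolve_left (pow_ne_zero 3 hz1)
  rw [← hz, ← hwz]
  ring

/-- Debye–Young: for `0 < δ < 1`, `α > 0` and `0 < q ≤ 4` the characteristic
polynomial is a Schur polynomial. -/
theorem debye_young_schur (δ α q : ℝ) (hδ0 : 0 < δ) (hδ1 : δ < 1) (hα : 0 < α)
    (hq0 : 0 < q) (hq4 : q ≤ 4) :
    IsSchur (Polynomial.C (((1 + δ * α) * (1 + δ) : ℝ) : ℂ) * Polynomial.X ^ 3
      - Polynomial.C ((3 + δ + δ * α + 3 * δ ^ 2 * α - (1 + δ) * q : ℝ) : ℂ) *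
          Polynomial.X ^ 2
      + Polynomial.C ((3 - δ - δ * α + 3 * δ ^ 2 * α - (1 - δ) * q : ℝ) : ℂ) *
          Polynomial.X
      - Polynomial.C (((1 - δ * α) * (1 - δ) : ℝ) : ℂ)) := by
  intro z hz
  simp only [IsRoot, eval_sub, eval_add, eval_mul, eval_pow, eval_C, eval_X] at hz
  have hδα : 0 < δ * α := mul_pos hδ0 hα
  refine Complex.norm_lt_one_of_cayley_cubic_eq_zero (a₃ := 4 + 4 * δ ^ 2 * α - q)
    (a₂ := δ * (4 + 4 * α - q)) (a₁ := q) (a₀ := δ * q) (by nlinarith [mul_pos hδ0 hδα])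
    (by nlinarith) hq0 (by positivity) ?_ ?_
  · have hHurwitz : q * (δ * (4 + 4 * α - q)) - δ * q * (4 + 4 * δ ^ 2 * α - q)
        = 4 * q * (δ * α) * (1 - δ ^ 2) := by ring
    have hδ2 : 0 < 1 - δ ^ 2 := by nlinarith
    nlinarith [mul_pos (mul_pos hq0 hδα) hδ2]
  · push_cast at hz ⊢
    linear_combination 4 * hz
end

section
/- Let α > 0 and 0 < q ≤ 4 be real numbers and set δ = 1. Then the Debye–Young characteristic polynomial φ₀(Z) = 2(1 + α)Z³ − (4 + 4α − 2q)Z² + (2 + 2α)Z is a simple von Neumann polynomial. -/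
open Polynomial

/-!
At `δ = 1` the characteristic polynomial factors as `Z · (a Z² + b Z + a)` with
`a = 2(1 + α)` and `b = -(4 + 4α - 2q)`. The discriminant of the quadratic factor is
`-4q(4 + 4α - q) < 0`, so its roots are a pair of distinct non-real conjugates `z, z̄`
whose product `|z|² = a / a = 1` puts both on the unit circle; they are simple because
the derivative `2az + b` has imaginary part `2a · im z ≠ 0`. The remaining root `0` lies
inside the disk.
-/

namespace Polynomial

theorem rootMultiplicity_eq_one_of_not_isRoot_derivative_s9 {K : Type*} [Field K] {p : K[X]}
    {t : K} (hp : p.IsRoot t) (hp' : ¬(derivative p).IsRoot t) : p.rootMultiplicity t = 1 := by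
  have hp0 : p ≠ 0 := by rintro rfl; simp at hp'
  have hpos := (rootMultiplicity_pos hp0).2 hp
  have hle := mt (one_lt_rootMultiplicity_iff_isRoot hp0).1 (fun h => hp' h.2)
  omega

end Polynomial

theorem ne_zero_of_discrim_neg {R : Type*} [CommRing R] [LinearOrder R] [IsStrictOrderedRing R]
    {a b c : R} (hd : discrim a b c < 0) : a ≠ 0 := by
  rintro rfl
  rw [discrim] at hd
  nlinarith [sq_nonneg b]

section RealQuadratic

variable {a b c : ℝ} {z : ℂ}

theorem Complex.im_ne_zero_of_quadratic_eq_zero (hd : discrim a b c < 0)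
    (h : (a : ℂ) * (z * z) + b * z + c = 0) : z.im ≠ 0 := by
  intro hy
  have hre := congrArg Complex.re h
  simp only [Complex.add_re, Complex.mul_re, Complex.ofReal_re, Complex.ofReal_im, hy,
    Complex.zero_re] at hre
  have hreal : a * (z.re * z.re) + b * z.re + c = 0 := by linear_combination hre
  have := discrim_eq_sq_of_quadratic_eq_zero hreal
  nlinarith [sq_nonneg (2 * a * z.re + b)]

theorem Complex.two_mul_re_add_eq_zero_of_quadratic_eq_zero (hd : discrim a b c < 0)
    (h : (a : ℂ) * (z * z) + b * z + c = 0) : 2 * a * z.re + b = 0 := by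
  have him := congrArg Complex.im h
  simp only [Complex.add_im, Complex.mul_re, Complex.mul_im, Complex.ofReal_re,
    Complex.ofReal_im, Complex.zero_im] at him
  have him' : z.im * (2 * a * z.re + b) = 0 := by linear_combination him
  exact (mul_eq_zero.1 him').resolve_left (Complex.im_ne_zero_of_quadratic_eq_zero hd h)

theorem Complex.mul_normSq_of_quadratic_eq_zero (hd : discrim a b c < 0)
    (h : (a : ℂ) * (z * z) + b * z + c = 0) :
    a * Complex.normSq z = c := by
  have hb := Complex.two_mul_re_add_eq_zero_of_quadratic_eq_zero hd h
  have hre := congrArg Complex.re h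
  simp only [Complex.add_re, Complex.mul_re, Complex.ofReal_re, Complex.ofReal_im,
    Complex.zero_re] at hre
  rw [Complex.normSq_apply]
  linear_combination -hre + z.re * hb

theorem Complex.two_mul_add_ne_zero_of_quadratic_eq_zero (hd : discrim a b c < 0)
    (h : (a : ℂ) * (z * z) + b * z + c = 0) :
    2 * a * z + b ≠ 0 := by
  intro h0
  simpa [ne_zero_of_discrim_neg hd, Complex.im_ne_zero_of_quadratic_eq_zero hd h]
    using congrArg Complex.im h0

theorem isSimpleVonNeumann_quadratic (hd : discrim a b c < 0) (hca : c / a ≤ 1) :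
    IsSimpleVonNeumann (C (a : ℂ) * X ^ 2 + C (b : ℂ) * X + C (c : ℂ)) := by
  intro z hz
  have h : (a : ℂ) * (z * z) + b * z + c = 0 := by
    simpa [sq] using hz
  have ha := ne_zero_of_discrim_neg hd
  refine ⟨?_, fun _ => rootMultiplicity_eq_one_of_not_isRoot_derivative_s9 hz ?_⟩
  · have hnormSq : Complex.normSq z = c / a := by
      rw [eq_div_iff ha, mul_comm]; exact Complex.mul_normSq_of_quadratic_eq_zero hd h
    rw [← sq_le_one_iff₀ (norm_nonneg z), Complex.sq_norm, hnormSq]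
    exact hca
  · have hderiv : (derivative (C (a : ℂ) * X ^ 2 + C (b : ℂ) * X + C (c : ℂ))).eval z
        = 2 * a * z + b := by
      simp only [derivative_add, derivative_mul, derivative_C, derivative_X_pow, derivative_X,
        eval_add, eval_mul, eval_C, eval_X, eval_pow, eval_one, eval_zero]
      ring
    rw [IsRoot, hderiv]
    exact Complex.two_mul_add_ne_zero_of_quadratic_eq_zero hd h

end RealQuadratic

theorem IsSimpleVonNeumann.X_mul {Q : ℂ[X]} (hQ : IsSimpleVonNeumann Q) (hQ0 : ¬Q.IsRoot 0) :
    IsSimpleVonNeumann (X * Q) := by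
  have hQne : Q ≠ 0 := by rintro rfl; exact hQ0 (by simp)
  intro z hz
  rcases mul_eq_zero.1 (show z * Q.eval z = 0 by simpa using hz) with rfl | hzQ
  · simp
  have hz0 : z ≠ 0 := by rintro rfl; exact hQ0 hzQ
  obtain ⟨hnorm, hsimple⟩ := hQ z hzQ
  refine ⟨hnorm, fun h1 => ?_⟩
  rw [rootMultiplicity_mul (mul_ne_zero X_ne_zero hQne),
    rootMultiplicity_eq_zero (by simpa using hz0), hsimple h1, zero_add]

/-- Debye–Young at `δ = 1`: for `α > 0` and `0 < q ≤ 4` the characteristic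
polynomial `2(1+α)Z³ − (4+4α−2q)Z² + (2+2α)Z` is a simple von Neumann
polynomial. -/
theorem debye_young_vonNeumann_delta_one (α q : ℝ) (hα : 0 < α)
    (hq0 : 0 < q) (hq4 : q ≤ 4) :
    IsSimpleVonNeumann (Polynomial.C ((2 * (1 + α) : ℝ) : ℂ) * Polynomial.X ^ 3
      - Polynomial.C ((4 + 4 * α - 2 * q : ℝ) : ℂ) * Polynomial.X ^ 2
      + Polynomial.C ((2 + 2 * α : ℝ) : ℂ) * Polynomial.X) := by
  have hfactor : Polynomial.C ((2 * (1 + α) : ℝ) : ℂ) * Polynomial.X ^ 3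
      - Polynomial.C ((4 + 4 * α - 2 * q : ℝ) : ℂ) * Polynomial.X ^ 2
      + Polynomial.C ((2 + 2 * α : ℝ) : ℂ) * Polynomial.X
      = X * (C ((2 * (1 + α) : ℝ) : ℂ) * X ^ 2 + C ((-(4 + 4 * α - 2 * q) : ℝ) : ℂ) * X
        + C ((2 + 2 * α : ℝ) : ℂ)) := by
    rw [Complex.ofReal_neg, map_neg]
    ring
  rw [hfactor]
  refine (isSimpleVonNeumann_quadratic ?_ ?_).X_mul ?_
  · rw [discrim]
    nlinarith [mul_pos hq0 (show 0 < 4 + 4 * α - q by linarith)]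
  · rw [div_le_one (by positivity)]
    linarith
  · simpa [-Complex.ofReal_mul, -Complex.ofReal_add] using (by linarith : 2 + 2 * α ≠ 0)
end

section
/- Let δ > 0, λ > 0 and ξ ∈ ℝ satisfy q := 4λ²sin²(ξ/2) = 4, and let G be the 3 × 3 complex matrix with row 1 = (1, −λ(e^{iξ} − 1), 0), row 2 = (−λ(1 − e^{−iξ}), (1 + δ − (1 + δ)q)/(1 + δ), ((1 − δ)/(1 + δ))·2δ), row 3 = (0, 0, (1 − δ)/(1 + δ)). Then the powers of G are not uniformly bounded: there is no constant C with ‖Gⁿ‖ ≤ C for all n. -/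
attribute [local instance] Matrix.frobeniusNormedAddCommGroup

lemma entry_le_frob (A : Matrix (Fin 3) (Fin 3) ℂ) (i j : Fin 3) : ‖A i j‖ ≤ ‖A‖ := by
  rw [Matrix.frobenius_norm_def]
  have h1 : ‖A i j‖ ^ (2:ℝ) ≤ ∑ i', ∑ j', ‖A i' j'‖ ^ (2:ℝ) := by
    calc ‖A i j‖ ^ (2:ℝ) ≤ ∑ j', ‖A i j'‖ ^ (2:ℝ) :=
          Finset.single_le_sum (fun _ _ => Real.rpow_nonneg (norm_nonneg _) _)
            (Finset.mem_univ j)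
      _ ≤ ∑ i', ∑ j', ‖A i' j'‖ ^ (2:ℝ) :=
          Finset.single_le_sum
            (fun _ _ => Finset.sum_nonneg fun _ _ => Real.rpow_nonneg (norm_nonneg _) _)
            (Finset.mem_univ i)
  have h2 : ‖A i j‖ = (‖A i j‖ ^ (2:ℝ)) ^ (1/2:ℝ) := by
    rw [← Real.rpow_mul (norm_nonneg _)]; norm_num
  rw [h2]
  exact Real.rpow_le_rpow (Real.rpow_nonneg (norm_nonneg _) _) h1 (by norm_num)

lemma key_aux (a b : ℂ) (hab : a * b = -4) (G : Matrix (Fin 3) (Fin 3) ℂ)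
    (h00 : G 0 0 = 1) (h01 : G 0 1 = a) (h10 : G 1 0 = b) (h11 : G 1 1 = -3)
    (h20 : G 2 0 = 0) (h21 : G 2 1 = 0) :
    ∀ n : ℕ, (G ^ n) 0 0 = (-1)^n * (1 - 2*n) ∧
      (G ^ n) 0 1 = (-1)^(n+1) * n * a := by
  intro n
  induction n with
  | zero => simp
  | succ n ih =>
    obtain ⟨ih0, ih1⟩ := ih
    have hmul : G ^ (n+1) = G ^ n * G := pow_succ G n
    constructor
    · rw [hmul, Matrix.mul_apply, Fin.sum_univ_three, h00, h10, h20, ih0, ih1]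
      push_cast
      linear_combination ((-1:ℂ))^(n+1) * (n:ℂ) * hab
    · rw [hmul, Matrix.mul_apply, Fin.sum_univ_three, h01, h11, h21, ih0, ih1]
      push_cast
      ring

/-- Instability of the Debye–Young amplification matrix when `ε_s = ε_∞`
(`α = 0`) and `q = 4λ²sin²(ξ/2) = 4`: the powers of `G` are not uniformly
bounded. -/
theorem debye_young_unstable (δ lam ξ q : ℝ) (hδ : 0 < δ) (hlam : 0 < lam)
    (hq : q = 4 * lam ^ 2 * Real.sin (ξ / 2) ^ 2) (hq4 : q = 4) :
    ¬ ∃ C : ℝ, ∀ n : ℕ,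
      ‖(!![1, -(lam : ℂ) * (Complex.exp (ξ * Complex.I) - 1), 0;
          -(lam : ℂ) * (1 - Complex.exp (-ξ * Complex.I)),
            (1 + (δ : ℂ) - (1 + (δ : ℂ)) * (q : ℂ)) / (1 + (δ : ℂ)),
            ((1 - (δ : ℂ)) / (1 + (δ : ℂ))) * (2 * (δ : ℂ));
          0, 0, (1 - (δ : ℂ)) / (1 + (δ : ℂ))] : Matrix (Fin 3) (Fin 3) ℂ) ^ n‖ ≤ C := by
  rintro ⟨C, hC⟩
  set a : ℂ := -(lam : ℂ) * (Complex.exp (ξ * Complex.I) - 1) with ha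
  set b : ℂ := -(lam : ℂ) * (1 - Complex.exp (-ξ * Complex.I)) with hb
  set G : Matrix (Fin 3) (Fin 3) ℂ :=
    !![1, a, 0;
       b, (1 + (δ : ℂ) - (1 + (δ : ℂ)) * (q : ℂ)) / (1 + (δ : ℂ)),
          ((1 - (δ : ℂ)) / (1 + (δ : ℂ))) * (2 * (δ : ℂ));
       0, 0, (1 - (δ : ℂ)) / (1 + (δ : ℂ))] with hG
  -- trig facts
  have hcos : Real.cos ξ = 1 - 2 * Real.sin (ξ/2) ^ 2 := by
    have := Real.sin_sq_eq_half_sub (ξ/2)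
    rw [show 2 * (ξ/2) = ξ by ring] at this
    linarith
  have hlc : lam ^ 2 * (2 - 2 * Real.cos ξ) = 4 := by
    rw [hcos]; rw [hq4] at hq; nlinarith
  have hlcC : (lam:ℂ) ^ 2 * (2 - 2 * (Real.cos ξ : ℂ)) = 4 := by exact_mod_cast hlc
  have heξ : Complex.exp (↑ξ * Complex.I) = Real.cos ξ + Real.sin ξ * Complex.I := by
    rw [Complex.exp_mul_I, ← Complex.ofReal_cos, ← Complex.ofReal_sin]
  have heξ' : Complex.exp (-↑ξ * Complex.I) = Real.cos ξ - Real.sin ξ * Complex.I := by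
    rw [show (-(ξ:ℂ)) = ((-ξ : ℝ) : ℂ) by push_cast; ring]
    rw [Complex.exp_mul_I, ← Complex.ofReal_cos, ← Complex.ofReal_sin,
      Real.cos_neg, Real.sin_neg]
    push_cast
    ring
  have hsc : ((Real.sin ξ : ℂ))^2 + ((Real.cos ξ : ℂ))^2 = 1 := by
    exact_mod_cast Real.sin_sq_add_cos_sq ξ
  have hab : a * b = -4 := by
    rw [ha, hb, heξ, heξ']
    have key : (-(lam:ℂ) * (↑(Real.cos ξ) + ↑(Real.sin ξ) * Complex.I - 1)) *
        (-(lam:ℂ) * (1 - (↑(Real.cos ξ) - ↑(Real.sin ξ) * Complex.I)))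
        = (lam:ℂ)^2 * (2 * Real.cos ξ - ((Real.sin ξ:ℂ)^2 + (Real.cos ξ:ℂ)^2) - 1) := by
      have hI : Complex.I^2 = -1 := Complex.I_sq
      linear_combination ((lam:ℂ)^2 * (Real.sin ξ:ℂ)^2) * hI
    rw [key, hsc]
    linear_combination -hlcC
  have hconj : (starRingEnd ℂ) a = -b := by
    rw [ha, hb, heξ, heξ']
    simp only [map_mul, map_neg, map_sub, map_add, map_one, Complex.conj_ofReal,
      Complex.conj_I]
    ring
  have hnsq : Complex.normSq a = 4 := by
    have h := Complex.mul_conj a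
    rw [hconj] at h
    have h2 : ((Complex.normSq a : ℂ)) = 4 := by rw [← h]; linear_combination -hab
    exact_mod_cast h2
  have hnorma : ‖a‖ = 2 := by
    have h1 : ‖a‖^2 = 4 := by
      rw [Complex.sq_norm, hnsq]
    nlinarith [norm_nonneg a]
  have hδ1 : (1 : ℂ) + (δ:ℂ) ≠ 0 := by
    have h : ((1 + δ : ℝ) : ℂ) ≠ 0 := Complex.ofReal_ne_zero.mpr (by linarith)
    push_cast at h
    exact h
  have hG11 : G 1 1 = -3 := by
    have h : G 1 1 = (1 + (δ : ℂ) - (1 + (δ : ℂ)) * (q : ℂ)) / (1 + (δ : ℂ)) := by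
      rw [hG]; rfl
    rw [h, hq4]
    push_cast
    field_simp
    ring
  have key := key_aux a b hab G (by rw [hG]; rfl) (by rw [hG]; rfl) (by rw [hG]; rfl)
    hG11 (by rw [hG]; rfl) (by rw [hG]; rfl)
  obtain ⟨n, hn⟩ := exists_nat_gt C
  have hle := hC n
  have hentry : ‖(G ^ n) 0 1‖ = 2 * n := by
    rw [(key n).2]
    rw [norm_mul, norm_mul, hnorma]
    simp [mul_comm]
  have hfb := entry_le_frob (G ^ n) 0 1
  rw [hentry] at hfb
  have h2n : 2 * (n:ℝ) ≤ C := hfb.trans hle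
  have hn0 : (0:ℝ) ≤ n := Nat.cast_nonneg n
  linarith
end

section
/- Let δ > 0, ω > 0, ε′ > 1 and 0 < q < 2 be real numbers. Then the Lorentz–Joseph et al. characteristic polynomial φ₀(Z) = (1 + δ + ωε′)Z⁴ − (4 + 2δ + 2ωε′ − (1 + δ + ω)q)Z³ + (6 + 2ωε′ − 2q)Z² − (4 − 2δ + 2ωε′ − (1 − δ + ω)q)Z + (1 − δ + ωε′) is a Schur polynomial. -/
/-! The Cayley transform `s = (z - 1) / (z + 1)` sends `‖z‖ ≥ 1` to `Re s ≥ 0`, and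
`(z + 1)⁴ F(s) = 16 (4 - q) φ₀(z)` for
`F(s) = s (b s² + c)(A s + D) + β (b s² + c) + γ s²` with `A = φ₀(-1) = 16 - 4q + 8ωε' - 2ωq`,
`D = 4δ(4 - q)`, `b = 4 - q`, `c = q`, `β = 2ω(4 - q)` and `γ = 16ω(ε' - 1)(2 - q)`.
Dividing by `s (b s² + c)` gives `A s + D + β / s + γ / (b s + c / s)`, a sum of terms with
nonnegative real part on `Re s ≥ 0` plus `D > 0`, so `F` has no zero there
(a Foster reactance argument). -/

open Polynomial

theorem Complex.re_inv_nonneg {w : ℂ} (hw : 0 ≤ w.re) : 0 ≤ w⁻¹.re := by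
  rw [Complex.inv_re]; exact div_nonneg hw (Complex.normSq_nonneg w)

theorem Complex.re_sub_one_div_add_one_nonneg {z : ℂ} (hz : 1 ≤ ‖z‖) :
    0 ≤ ((z - 1) / (z + 1)).re := by
  have key : ((z - 1) / (z + 1)).re = (‖z‖ ^ 2 - 1) / Complex.normSq (z + 1) := by
    rw [Complex.div_re, ← add_div, Complex.sq_norm, Complex.normSq_apply z]
    congr 1
    simp only [Complex.sub_re, Complex.sub_im, Complex.add_re, Complex.add_im, Complex.one_re,
      Complex.one_im]
    ring
  rw [key]
  exact div_nonneg (by nlinarith) (Complex.normSq_nonneg _)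

theorem quartic_ne_zero_of_re_nonneg {A D b c β γ : ℝ} (hA : 0 ≤ A) (hD : 0 < D) (hb : 0 ≤ b)
    (hc : 0 < c) (hβ : 0 < β) (hγ : 0 < γ) {s : ℂ} (hs : 0 ≤ s.re) :
    s * (b * s ^ 2 + c) * (A * s + D) + β * (b * s ^ 2 + c) + γ * s ^ 2 ≠ 0 := by
  intro h
  have hs0 : s ≠ 0 := by
    rintro rfl
    have : ((β * c : ℝ) : ℂ) = 0 := by push_cast; linear_combination h
    exact (mul_pos hβ hc).ne' (Complex.ofReal_eq_zero.mp this)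
  have hB : (b : ℂ) * s ^ 2 + c ≠ 0 := by
    intro hB
    rw [hB, mul_zero, zero_mul, mul_zero, zero_add, zero_add] at h
    exact mul_ne_zero (Complex.ofReal_ne_zero.mpr hγ.ne') (pow_ne_zero 2 hs0) h
  have hinv : ((b : ℂ) * s + c * s⁻¹)⁻¹ = s / (b * s ^ 2 + c) := by
    rw [inv_eq_iff_eq_inv, inv_div]
    field_simp
  have hdiv : A * s + D + β * s⁻¹ + γ * (b * s + c * s⁻¹)⁻¹ = 0 := by
    refine (mul_eq_zero.mp ?_).resolve_right (mul_ne_zero hs0 hB)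
    calc _ = s * (b * s ^ 2 + c) * (A * s + D) + β * (s⁻¹ * s) * (b * s ^ 2 + c)
          + γ * s ^ 2 * ((b * s ^ 2 + c)⁻¹ * (b * s ^ 2 + c)) := by
            rw [hinv, div_eq_mul_inv]; ring
      _ = 0 := by rw [inv_mul_cancel₀ hs0, inv_mul_cancel₀ hB, ← h]; ring
  have hre := congrArg Complex.re hdiv
  simp only [Complex.add_re, Complex.re_ofReal_mul, Complex.ofReal_re, Complex.zero_re] at hre
  have h1 : 0 ≤ (s⁻¹).re := Complex.re_inv_nonneg hs
  have h2 : 0 ≤ ((b * s + c * s⁻¹)⁻¹).re := by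
    apply Complex.re_inv_nonneg
    simp only [Complex.add_re, Complex.re_ofReal_mul]
    positivity
  nlinarith [mul_nonneg hA hs, mul_nonneg hβ.le h1, mul_nonneg hγ.le h2]

/-- Lorentz–Joseph et al. (an-harmonic case): for `δ > 0`, `ω > 0`, `ε′ > 1` and
`0 < q < 2` the characteristic polynomial is a Schur polynomial. -/
theorem lorentz_joseph_schur (δ ω ε' q : ℝ) (hδ : 0 < δ) (hω : 0 < ω)
    (hε : 1 < ε') (hq0 : 0 < q) (hq2 : q < 2) :
    IsSchur (Polynomial.C ((1 + δ + ω * ε' : ℝ) : ℂ) * Polynomial.X ^ 4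
      - Polynomial.C ((4 + 2 * δ + 2 * ω * ε' - (1 + δ + ω) * q : ℝ) : ℂ) *
          Polynomial.X ^ 3
      + Polynomial.C ((6 + 2 * ω * ε' - 2 * q : ℝ) : ℂ) * Polynomial.X ^ 2
      - Polynomial.C ((4 - 2 * δ + 2 * ω * ε' - (1 - δ + ω) * q : ℝ) : ℂ) *
          Polynomial.X
      + Polynomial.C ((1 - δ + ω * ε' : ℝ) : ℂ)) := by
  intro z hz
  simp only [IsRoot, eval_add, eval_sub, eval_mul, eval_pow, eval_C, eval_X] at hz
  push_cast at hz
  have hA : 0 < 16 - 4 * q + 8 * ω * ε' - 2 * ω * q := by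
    nlinarith [mul_pos hω (sub_pos.mpr hε)]
  have hz1 : z + 1 ≠ 0 := by
    intro h
    rw [eq_neg_of_add_eq_zero_left h] at hz
    refine hA.ne' (Complex.ofReal_injective ?_)
    push_cast
    linear_combination hz
  by_contra! hz_norm
  refine quartic_ne_zero_of_re_nonneg (D := 4 * δ * (4 - q)) (b := 4 - q)
    (β := 2 * ω * (4 - q)) (γ := 16 * ω * (ε' - 1) * (2 - q))
    hA.le (mul_pos (by positivity) (by linarith)) (by linarith) hq0 (by nlinarith)
    (mul_pos (mul_pos (by positivity) (sub_pos.mpr hε)) (sub_pos.mpr hq2))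
    (Complex.re_sub_one_div_add_one_nonneg hz_norm) ?_
  refine (mul_eq_zero.mp ?_).resolve_left (pow_ne_zero 4 hz1)
  field_simp
  push_cast
  linear_combination (16 * (4 - q) : ℂ) * hz
end

section
/- Let δ > 0, ω > 0, ε′ ≥ 1 and 0 < q ≤ 2 be real numbers. Then the Lorentz–Joseph et al. characteristic polynomial φ₀(Z) = (1 + δ + ωε′)Z⁴ − (4 + 2δ + 2ωε′ − (1 + δ + ω)q)Z³ + (6 + 2ωε′ − 2q)Z² − (4 − 2δ + 2ωε′ − (1 − δ + ω)q)Z + (1 − δ + ωε′) is a simple von Neumann polynomial. -/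
/-!
The Cayley transform `s = (z - 1) / (z + 1)` maps the closed unit disk onto the closed left
half-plane and the unit circle onto the imaginary axis. Under it
`8 φ₀(z) = (z + 1)⁴ ψ(s)` for the real quartic `ψ = b₄ s⁴ + b₃ s³ + b₂ s² + b₁ s + b₀` with
`b₀ = ωq`, `b₁ = 2δq`, `b₂ = 2q + 4ωε'`, `b₃ = 2δ(4 - q)`, `b₄ = 8 - 2q - ωq + 4ωε'`, all positive.
These satisfy the (non-strict) Routh–Hurwitz condition `b₀ b₃² + b₄ b₁² ≤ b₁ b₂ b₃`, so the roots
of `ψ` lie in the closed left half-plane. A root `iy` on the imaginary axis satisfies `b₃ y² = b₁`,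
so `Re ψ'(iy) = b₁ - 3 b₃ y² = -2 b₁ ≠ 0` and the root is simple.
-/

open Polynomial

theorem Polynomial.rootMultiplicity_C_mul {R : Type*} [CommRing R] [IsDomain R] {c : R}
    (hc : c ≠ 0) (p : R[X]) (x : R) : rootMultiplicity x (C c * p) = rootMultiplicity x p := by
  rcases eq_or_ne p 0 with rfl | hp
  · simp
  · rw [rootMultiplicity_mul (mul_ne_zero (C_ne_zero.mpr hc) hp), rootMultiplicity_C, zero_add]

theorem isSimpleVonNeumann_C_mul_iff {c : ℂ} (hc : c ≠ 0) {p : ℂ[X]} :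
    IsSimpleVonNeumann (C c * p) ↔ IsSimpleVonNeumann p := by
  simp only [IsSimpleVonNeumann, IsRoot.def, eval_mul, eval_C, mul_eq_zero, hc, false_or,
    rootMultiplicity_C_mul hc]

theorem isSimpleVonNeumann_of_not_isRoot_derivative {p : ℂ[X]} (hp : p ≠ 0)
    (h : ∀ z, p.IsRoot z → ‖z‖ ≤ 1 ∧ (‖z‖ = 1 → ¬ (derivative p).IsRoot z)) :
    IsSimpleVonNeumann p := by
  intro z hz
  refine ⟨(h z hz).1, fun hz1 => le_antisymm ?_ ((rootMultiplicity_pos hp).mpr hz)⟩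
  rw [← not_lt, one_lt_rootMultiplicity_iff_isRoot hp]
  exact fun h' => (h z hz).2 hz1 h'.2

namespace Complex

noncomputable def cayley (z : ℂ) : ℂ := (z - 1) / (z + 1)

theorem re_cayley_s12 (z : ℂ) : (cayley z).re = (normSq z - 1) / normSq (z + 1) := by
  simp only [cayley, div_re, sub_re, sub_im, add_re, add_im, one_re, one_im, normSq_apply]
  ring

theorem norm_le_one_of_re_cayley_nonpos {z : ℂ} (hz : z + 1 ≠ 0) (h : (cayley z).re ≤ 0) :
    ‖z‖ ≤ 1 := by
  rw [re_cayley_s12, div_le_iff₀ (normSq_pos.mpr hz), zero_mul, sub_nonpos] at h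
  rw [← sq_le_one_iff₀ (norm_nonneg z), ← normSq_eq_norm_sq]
  exact h

theorem re_cayley_eq_zero_of_norm_eq_one {z : ℂ} (h : ‖z‖ = 1) : (cayley z).re = 0 := by
  rw [re_cayley_s12, normSq_eq_norm_sq, h]
  simp

end Complex

section Quartic

variable (b₀ b₁ b₂ b₃ b₄ : ℝ)

noncomputable def quartic : ℂ[X] :=
  C (b₄ : ℂ) * X ^ 4 + C (b₃ : ℂ) * X ^ 3 + C (b₂ : ℂ) * X ^ 2 + C (b₁ : ℂ) * X + C (b₀ : ℂ)

noncomputable def cayleyQuartic : ℂ[X] :=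
  C (b₄ : ℂ) * (X - 1) ^ 4 + C (b₃ : ℂ) * (X - 1) ^ 3 * (X + 1)
    + C (b₂ : ℂ) * (X - 1) ^ 2 * (X + 1) ^ 2 + C (b₁ : ℂ) * (X - 1) * (X + 1) ^ 3
    + C (b₀ : ℂ) * (X + 1) ^ 4

variable {b₀ b₁ b₂ b₃ b₄}

theorem eval_quartic_mk (x y : ℝ) :
    (quartic b₀ b₁ b₂ b₃ b₄).eval ⟨x, y⟩ =
      ⟨(b₄ * x ^ 4 + b₃ * x ^ 3 + b₂ * x ^ 2 + b₁ * x + b₀)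
          - (6 * b₄ * x ^ 2 + 3 * b₃ * x + b₂) * y ^ 2 + b₄ * y ^ 4,
        y * ((4 * b₄ * x ^ 3 + 3 * b₃ * x ^ 2 + 2 * b₂ * x + b₁) - (4 * b₄ * x + b₃) * y ^ 2)⟩ := by
  apply Complex.ext <;>
  simp [quartic, pow_succ] <;> ring

theorem eval_derivative_quartic_mk (x y : ℝ) :
    (derivative (quartic b₀ b₁ b₂ b₃ b₄)).eval ⟨x, y⟩ =
      ⟨(4 * b₄ * x ^ 3 + 3 * b₃ * x ^ 2 + 2 * b₂ * x + b₁) - 3 * (4 * b₄ * x + b₃) * y ^ 2,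
        y * (2 * (6 * b₄ * x ^ 2 + 3 * b₃ * x + b₂) - 4 * b₄ * y ^ 2)⟩ := by
  apply Complex.ext <;>
  simp [quartic, pow_succ] <;> ring

theorem four_mul_le_sq_of_hurwitz (h0 : 0 ≤ b₀) (h1 : 0 < b₁) (h3 : 0 < b₃) (h4 : 0 ≤ b₄)
    (hT : b₀ * b₃ ^ 2 + b₄ * b₁ ^ 2 ≤ b₁ * b₂ * b₃) : 4 * b₀ * b₄ ≤ b₂ ^ 2 := by
  have hAMGM : 4 * (b₀ * b₃ ^ 2) * (b₄ * b₁ ^ 2) ≤ (b₀ * b₃ ^ 2 + b₄ * b₁ ^ 2) ^ 2 := by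
    nlinarith [sq_nonneg (b₀ * b₃ ^ 2 - b₄ * b₁ ^ 2)]
  have hsq : (b₀ * b₃ ^ 2 + b₄ * b₁ ^ 2) ^ 2 ≤ (b₁ * b₂ * b₃) ^ 2 :=
    pow_le_pow_left₀ (by positivity) hT 2
  have : 4 * b₀ * b₄ * (b₁ * b₃) ^ 2 ≤ b₂ ^ 2 * (b₁ * b₃) ^ 2 := by nlinarith
  exact le_of_mul_le_mul_right this (by positivity)

theorem re_nonpos_of_isRoot_quartic (h0 : 0 < b₀) (h1 : 0 < b₁) (h2 : 0 < b₂) (h3 : 0 < b₃)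
    (h4 : 0 < b₄) (hT : b₀ * b₃ ^ 2 + b₄ * b₁ ^ 2 ≤ b₁ * b₂ * b₃) {s : ℂ}
    (hs : (quartic b₀ b₁ b₂ b₃ b₄).IsRoot s) : s.re ≤ 0 := by
  obtain ⟨x, y⟩ := s
  rw [IsRoot.def, eval_quartic_mk, Complex.ext_iff] at hs
  set P := b₄ * x ^ 4 + b₃ * x ^ 3 + b₂ * x ^ 2 + b₁ * x + b₀
  set P' := 4 * b₄ * x ^ 3 + 3 * b₃ * x ^ 2 + 2 * b₂ * x + b₁
  set M := 6 * b₄ * x ^ 2 + 3 * b₃ * x + b₂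
  set L := 4 * b₄ * x + b₃
  obtain ⟨hre, him⟩ : P - M * y ^ 2 + b₄ * y ^ 4 = 0 ∧ y * (P' - L * y ^ 2) = 0 := hs
  show x ≤ 0
  by_contra! hx
  rcases eq_or_ne y 0 with rfl | hy
  · have : 0 < P := by positivity
    linarith
  have hLy : L * y ^ 2 = P' := by linear_combination -((mul_eq_zero.mp him).resolve_left hy)
  -- Eliminating `y ^ 2` between the real and imaginary parts leaves a resultant in `x` which,
  -- by the Hurwitz inequality, is negative for `x > 0`.
  have hres : b₄ * P' ^ 2 - M * P' * L + P * L ^ 2 = 0 := by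
    linear_combination L ^ 2 * hre + (M * L - b₄ * (P' + L * y ^ 2)) * hLy
  have hK := four_mul_le_sq_of_hurwitz h0.le h1 h3 h4.le hT
  have hexp : b₄ * P' ^ 2 - M * P' * L + P * L ^ 2
      = -(b₁ * b₂ * b₃ - b₀ * b₃ ^ 2 - b₄ * b₁ ^ 2)
        - (2 * b₃ * x + 4 * b₄ * x ^ 2) * (b₂ ^ 2 - 4 * b₀ * b₄)
        - (2 * b₁ * b₃ ^ 2 * x + (8 * b₂ * b₃ ^ 2 + 4 * b₁ * b₃ * b₄) * x ^ 2
          + (8 * b₃ ^ 3 + 32 * b₂ * b₃ * b₄) * x ^ 3 + (48 * b₃ ^ 2 * b₄ + 32 * b₂ * b₄ ^ 2) * x ^ 4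
          + 96 * b₃ * b₄ ^ 2 * x ^ 5 + 64 * b₄ ^ 3 * x ^ 6) := by
    ring
  have hpos : 0 < 2 * b₁ * b₃ ^ 2 * x + (8 * b₂ * b₃ ^ 2 + 4 * b₁ * b₃ * b₄) * x ^ 2
          + (8 * b₃ ^ 3 + 32 * b₂ * b₃ * b₄) * x ^ 3 + (48 * b₃ ^ 2 * b₄ + 32 * b₂ * b₄ ^ 2) * x ^ 4
          + 96 * b₃ * b₄ ^ 2 * x ^ 5 + 64 * b₄ ^ 3 * x ^ 6 := by
    positivity
  have hnn : 0 ≤ (2 * b₃ * x + 4 * b₄ * x ^ 2) * (b₂ ^ 2 - 4 * b₀ * b₄) :=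
    mul_nonneg (by positivity) (by linarith)
  linarith

theorem not_isRoot_derivative_quartic_of_re_eq_zero (h0 : b₀ ≠ 0) (h1 : b₁ ≠ 0) {s : ℂ}
    (hs : (quartic b₀ b₁ b₂ b₃ b₄).IsRoot s) (hre : s.re = 0) :
    ¬ (derivative (quartic b₀ b₁ b₂ b₃ b₄)).IsRoot s := by
  obtain ⟨x, y⟩ := s
  obtain rfl : x = 0 := hre
  rw [IsRoot.def, eval_quartic_mk, Complex.ext_iff] at hs
  rw [IsRoot.def, eval_derivative_quartic_mk, Complex.ext_iff]
  simp only [ne_eq, OfNat.ofNat_ne_zero, not_false_eq_true, zero_pow, mul_zero, add_zero,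
    zero_add, Complex.zero_re, Complex.zero_im] at hs ⊢
  obtain ⟨hre, him⟩ := hs
  have hy : y ≠ 0 := by
    rintro rfl
    exact h0 (by simpa using hre)
  have hb : b₃ * y ^ 2 = b₁ := by linear_combination -((mul_eq_zero.mp him).resolve_left hy)
  rintro ⟨hd, -⟩
  exact h1 (by linear_combination -(hd + 3 * hb) / 2)

theorem eval_cayleyQuartic {z : ℂ} (hz : z + 1 ≠ 0) :
    (cayleyQuartic b₀ b₁ b₂ b₃ b₄).eval z
      = (z + 1) ^ 4 * (quartic b₀ b₁ b₂ b₃ b₄).eval (Complex.cayley z) := by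
  simp only [cayleyQuartic, quartic, Complex.cayley, eval_add, eval_mul, eval_pow, eval_sub, eval_C,
    eval_X, eval_one]
  field_simp

theorem eval_derivative_cayleyQuartic {z : ℂ} (hz : z + 1 ≠ 0) :
    (derivative (cayleyQuartic b₀ b₁ b₂ b₃ b₄)).eval z
      = 4 * (z + 1) ^ 3 * (quartic b₀ b₁ b₂ b₃ b₄).eval (Complex.cayley z)
        + 2 * (z + 1) ^ 2 * (derivative (quartic b₀ b₁ b₂ b₃ b₄)).eval (Complex.cayley z) := by
  simp only [cayleyQuartic, quartic, Complex.cayley, derivative_add, derivative_sub, derivative_mul,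
    derivative_C, derivative_pow, derivative_X, derivative_one, eval_add, eval_mul, eval_pow,
    eval_sub, eval_C, eval_X, eval_one, eval_zero, Nat.cast_ofNat, Nat.reduceSub]
  field_simp
  ring

theorem isSimpleVonNeumann_cayleyQuartic (h0 : 0 < b₀) (h1 : 0 < b₁) (h2 : 0 < b₂)
    (h3 : 0 < b₃) (h4 : 0 < b₄) (hT : b₀ * b₃ ^ 2 + b₄ * b₁ ^ 2 ≤ b₁ * b₂ * b₃) :
    IsSimpleVonNeumann (cayleyQuartic b₀ b₁ b₂ b₃ b₄) := by
  have heval : (cayleyQuartic b₀ b₁ b₂ b₃ b₄).eval (-1) ≠ 0 := by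
    norm_num [cayleyQuartic, h4.ne']
  refine isSimpleVonNeumann_of_not_isRoot_derivative (fun h => heval (by simp [h]))
    fun z hz => ?_
  have hz1 : z + 1 ≠ 0 := fun h => heval (by rwa [← eq_neg_of_add_eq_zero_left h])
  have hψ : (quartic b₀ b₁ b₂ b₃ b₄).IsRoot (Complex.cayley z) := by
    rw [IsRoot.def, eval_cayleyQuartic hz1] at hz
    exact (mul_eq_zero.mp hz).resolve_left (pow_ne_zero _ hz1)
  refine ⟨Complex.norm_le_one_of_re_cayley_nonpos hz1
    (re_nonpos_of_isRoot_quartic h0 h1 h2 h3 h4 hT hψ), fun hn => ?_⟩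
  rw [IsRoot.def, eval_derivative_cayleyQuartic hz1, hψ.eq_zero, mul_zero, zero_add]
  exact mul_ne_zero (mul_ne_zero two_ne_zero (pow_ne_zero _ hz1))
    (not_isRoot_derivative_quartic_of_re_eq_zero h0.ne' h1.ne' hψ
      (Complex.re_cayley_eq_zero_of_norm_eq_one hn))

end Quartic

/-- Lorentz–Joseph et al. (an-harmonic case): for `δ > 0`, `ω > 0`, `ε′ ≥ 1` and
`0 < q ≤ 2` the characteristic polynomial is a simple von Neumann polynomial. -/
theorem lorentz_joseph_vonNeumann (δ ω ε' q : ℝ) (hδ : 0 < δ) (hω : 0 < ω)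
    (hε : 1 ≤ ε') (hq0 : 0 < q) (hq2 : q ≤ 2) :
    IsSimpleVonNeumann (Polynomial.C ((1 + δ + ω * ε' : ℝ) : ℂ) * Polynomial.X ^ 4
      - Polynomial.C ((4 + 2 * δ + 2 * ω * ε' - (1 + δ + ω) * q : ℝ) : ℂ) *
          Polynomial.X ^ 3
      + Polynomial.C ((6 + 2 * ω * ε' - 2 * q : ℝ) : ℂ) * Polynomial.X ^ 2
      - Polynomial.C ((4 - 2 * δ + 2 * ω * ε' - (1 - δ + ω) * q : ℝ) : ℂ) *
          Polynomial.X
      + Polynomial.C ((1 - δ + ω * ε' : ℝ) : ℂ)) := by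
  rw [← isSimpleVonNeumann_C_mul_iff (by norm_num : (8 : ℂ) ≠ 0)]
  convert isSimpleVonNeumann_cayleyQuartic (b₀ := ω * q) (b₁ := 2 * δ * q)
    (b₂ := 2 * q + 4 * ω * ε') (b₃ := 2 * δ * (4 - q)) (b₄ := 8 - 2 * q - ω * q + 4 * ω * ε')
    (by positivity) (by positivity) (by positivity) (by nlinarith) (by nlinarith) ?_ using 1
  · simp only [cayleyQuartic]
    push_cast
    simp only [map_add, map_sub, map_mul, map_one, map_ofNat]
    ring
  -- the Hurwitz gap `b₁ b₂ b₃ - b₀ b₃ ^ 2 - b₄ b₁ ^ 2` equals `32 δ ^ 2 ω q (2 - q) (ε' - 1)`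
  · nlinarith [mul_nonneg (mul_nonneg (mul_nonneg (mul_nonneg (sq_nonneg δ) hω.le) hq0.le)
      (sub_nonneg.mpr hε)) (sub_nonneg.mpr hq2)]
end

section
/- Let ω > 0, ε′ > 1 and 0 < q ≤ 2 be real numbers. Then the polynomial φ₀(Z) = (1 + ωε′)Z⁴ − (4 + 2ωε′ − (1 + ω)q)Z³ + (6 + 2ωε′ − 2q)Z² − (4 + 2ωε′ − (1 + ω)q)Z + (1 + ωε′) (the Lorentz–Joseph et al. characteristic polynomial in the harmonic case δ = 0) is a simple von Neumann polynomial. -/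
open Polynomial

open ComplexConjugate

/-!
φ₀ is palindromic, `a Z⁴ - b Z³ + c Z² - b Z + a`, so a root `z` is nonzero and `w = z + z⁻¹`
is a root of the real quadratic `g(w) = a w² - b w + (c - 2a)`. Here `g` has positive
discriminant, `g(±2) > 0` and its vertex lies in `(-2, 2)`, so `w` is real with `|w| < 2`;
then `z` and `z̄` both solve `Z² - w Z + 1 = 0`, which forces `z z̄ = 1`.
At a root, `φ₀'(z) = (z² - 1) g'(w)`: here `z² ≠ 1` because `|w| < 2`, and `g'(w) ≠ 0`
because `g'(w)² = disc g`, so every root is simple.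
-/

namespace Polynomial

theorem rootMultiplicity_eq_one_of_eval_derivative_ne_zero {R : Type*} [CommRing R] {p : R[X]}
    {t : R} (hp : p ≠ 0) (hroot : p.IsRoot t) (hderiv : (derivative p).eval t ≠ 0) :
    p.rootMultiplicity t = 1 := by
  have hle : ¬ 1 < p.rootMultiplicity t :=
    (one_lt_rootMultiplicity_iff_isRoot hp).not.2 fun h => hderiv h.2
  have hpos : 0 < p.rootMultiplicity t := (rootMultiplicity_pos hp).2 hroot
  omega

noncomputable def palindromicQuartic {R : Type*} [CommRing R] (a b c : R) : R[X] :=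
  C a * X ^ 4 - C b * X ^ 3 + C c * X ^ 2 - C b * X + C a

section Field

variable {K : Type*} [Field K] (a b c : K) {z : K}

theorem eval_palindromicQuartic (hz : z ≠ 0) :
    (palindromicQuartic a b c).eval z =
      z ^ 2 * (a * ((z + z⁻¹) * (z + z⁻¹)) + -b * (z + z⁻¹) + (c - 2 * a)) := by
  simp only [palindromicQuartic, eval_add, eval_sub, eval_mul, eval_C, eval_pow, eval_X]
  field_simp
  ring

theorem eval_derivative_palindromicQuartic (hz : z ≠ 0)
    (hroot : (palindromicQuartic a b c).IsRoot z) :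
    (derivative (palindromicQuartic a b c)).eval z = (z ^ 2 - 1) * (2 * a * (z + z⁻¹) + -b) := by
  have hroot' : a * z ^ 4 - b * z ^ 3 + c * z ^ 2 - b * z + a = 0 := by
    simpa [palindromicQuartic] using hroot
  have hderiv : (derivative (palindromicQuartic a b c)).eval z =
      4 * a * z ^ 3 - 3 * b * z ^ 2 + 2 * c * z - b := by
    simp only [palindromicQuartic, derivative_sub, derivative_mul, derivative_C,
      zero_mul, derivative_X_pow_succ, Nat.cast_ofNat, map_add, map_one, zero_add, Nat.cast_one,
      pow_one, derivative_X, mul_one, add_zero, eval_sub, eval_add, eval_mul, eval_C, eval_one,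
      eval_pow, eval_X, sub_left_inj]
    ring
  rw [hderiv]
  apply mul_left_cancel₀ hz
  field_simp
  linear_combination 2 * hroot'

end Field

end Polynomial

theorem Complex.norm_eq_one_of_sq_sub_mul_add_one_eq_zero_s13 {w : ℝ} (hw : w ^ 2 < 4) {z : ℂ}
    (h : z ^ 2 - w * z + 1 = 0) : ‖z‖ = 1 := by
  have hconj : conj z ^ 2 - w * conj z + 1 = 0 := by
    simpa using congrArg conj h
  have hsum : z + conj z = w := by
    have hfactor : (z - conj z) * (z + conj z - w) = 0 := by linear_combination h - hconj
    rcases mul_eq_zero.1 hfactor with hreal | hsum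
    · have hre : ((z.re : ℝ) : ℂ) = z := Complex.conj_eq_iff_re.1 (sub_eq_zero.1 hreal).symm
      rw [← hre] at h
      have h' : z.re ^ 2 - w * z.re + 1 = 0 := by exact_mod_cast h
      nlinarith [sq_nonneg (2 * z.re - w)]
    · exact sub_eq_zero.1 hsum
  have hnorm : (‖z‖ : ℂ) ^ 2 = 1 := by
    rw [← Complex.mul_conj']
    linear_combination z * hsum - h
  exact (pow_eq_one_iff_of_nonneg (norm_nonneg z) two_ne_zero).1 (by exact_mod_cast hnorm)

theorem sq_lt_four_of_quadratic_eq_zero {a b d r : ℝ} (ha : 0 < a) (hb : |b| < 4 * a)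
    (hg2 : 0 < 4 * a - 2 * b + d) (hgm2 : 0 < 4 * a + 2 * b + d)
    (hr : a * (r * r) + -b * r + d = 0) : r ^ 2 < 4 := by
  obtain ⟨hb1, hb2⟩ := abs_lt.1 hb
  by_contra! h
  rcases le_or_gt r 0 with hr0 | hr0
  · have hr2 : r ≤ -2 := by nlinarith
    nlinarith [mul_nonneg (by linarith : (0 : ℝ) ≤ -(r + 2))
      (by nlinarith : (0 : ℝ) ≤ b - a * (r - 2))]
  · have hr2 : 2 ≤ r := by nlinarith
    nlinarith [mul_nonneg (sub_nonneg.2 hr2) (by nlinarith : (0 : ℝ) ≤ a * (r + 2) - b)]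

theorem exists_ofReal_eq_of_quadratic_eq_zero {a b c : ℝ} (ha : a ≠ 0)
    (hd : 0 ≤ discrim a b c)
    {w : ℂ} (hw : a * (w * w) + b * w + c = 0) : ∃ r : ℝ, (r : ℂ) = w := by
  have hdisc : discrim (a : ℂ) b c = (√(discrim a b c) : ℂ) * (√(discrim a b c) : ℂ) := by
    rw [← Complex.ofReal_mul, Real.mul_self_sqrt hd]
    simp [discrim]
  rcases (quadratic_eq_zero_iff (by exact_mod_cast ha) hdisc w).1 hw with h | h
  · exact ⟨(-b + √(discrim a b c)) / (2 * a), by rw [h]; push_cast; ring⟩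
  · exact ⟨(-b - √(discrim a b c)) / (2 * a), by rw [h]; push_cast; ring⟩

theorem isSimpleVonNeumann_palindromicQuartic {a b c : ℝ} (ha : 0 < a)
    (hdisc : 0 < discrim a (-b) (c - 2 * a)) (hb : |b| < 4 * a)
    (hg2 : 0 < 4 * a - 2 * b + (c - 2 * a)) (hgm2 : 0 < 4 * a + 2 * b + (c - 2 * a)) :
    IsSimpleVonNeumann (palindromicQuartic (a : ℂ) b c) := by
  intro z hz
  have hP : palindromicQuartic (a : ℂ) b c ≠ 0 := fun hP => by
    simpa [palindromicQuartic, ha.ne'] using congrArg (eval 0) hP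
  have hz0 : z ≠ 0 := by
    rintro rfl
    simp [palindromicQuartic, ha.ne'] at hz
  have hgw : (a : ℂ) * ((z + z⁻¹) * (z + z⁻¹)) + ((-b : ℝ) : ℂ) * (z + z⁻¹)
      + ((c - 2 * a : ℝ) : ℂ) = 0 := by
    have heval := eval_palindromicQuartic (a : ℂ) b c hz0
    rw [hz.eq_zero] at heval
    push_cast
    exact (mul_eq_zero.1 heval.symm).resolve_left (pow_ne_zero 2 hz0)
  obtain ⟨r, hr⟩ := exists_ofReal_eq_of_quadratic_eq_zero ha.ne' hdisc.le hgw
  rw [← hr] at hgw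
  have hgr : a * (r * r) + -b * r + (c - 2 * a) = 0 := by exact_mod_cast hgw
  have hr4 := sq_lt_four_of_quadratic_eq_zero ha hb hg2 hgm2 hgr
  have hzr : z ^ 2 - r * z + 1 = 0 := by
    rw [hr]
    field_simp
    ring
  refine ⟨(Complex.norm_eq_one_of_sq_sub_mul_add_one_eq_zero_s13 hr4 hzr).le, fun _ =>
    rootMultiplicity_eq_one_of_eval_derivative_ne_zero hP hz ?_⟩
  rw [eval_derivative_palindromicQuartic _ _ _ hz0 hz, ← hr]
  refine mul_ne_zero (fun hz1 => hr4.ne ?_) ?_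
  · have : (r : ℂ) ^ 2 = 4 := by linear_combination (r * z + 2) * (hz1 - hzr) - r ^ 2 * hz1
    exact_mod_cast this
  · have hslope : 2 * a * r + -b ≠ 0 := fun h => by
      have := discrim_eq_sq_of_quadratic_eq_zero hgr
      rw [h] at this
      linarith
    exact_mod_cast hslope

/-- Lorentz–Joseph et al. (harmonic case `δ = 0`): for `ω > 0`, `ε′ > 1` and
`0 < q ≤ 2` the characteristic polynomial is a simple von Neumann polynomial. -/
theorem lorentz_joseph_harmonic_vonNeumann (ω ε' q : ℝ) (hω : 0 < ω)
    (hε : 1 < ε') (hq0 : 0 < q) (hq2 : q ≤ 2) :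
    IsSimpleVonNeumann (Polynomial.C ((1 + ω * ε' : ℝ) : ℂ) * Polynomial.X ^ 4
      - Polynomial.C ((4 + 2 * ω * ε' - (1 + ω) * q : ℝ) : ℂ) * Polynomial.X ^ 3
      + Polynomial.C ((6 + 2 * ω * ε' - 2 * q : ℝ) : ℂ) * Polynomial.X ^ 2
      - Polynomial.C ((4 + 2 * ω * ε' - (1 + ω) * q : ℝ) : ℂ) * Polynomial.X
      + Polynomial.C ((1 + ω * ε' : ℝ) : ℂ)) := by
  have hωε : 0 < ω * ε' := mul_pos hω (by linarith)
  have hdisc : discrim (1 + ω * ε') (-(4 + 2 * ω * ε' - (1 + ω) * q))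
      (6 + 2 * ω * ε' - 2 * q - 2 * (1 + ω * ε')) =
      (2 * ω * ε' - (1 + ω) * q) ^ 2 + 8 * ω * q * (ε' - 1) := by
    rw [discrim]
    ring
  apply isSimpleVonNeumann_palindromicQuartic (by linarith)
  · rw [hdisc]
    nlinarith [sq_nonneg (2 * ω * ε' - (1 + ω) * q), mul_pos (mul_pos hω hq0) (sub_pos.2 hε)]
  · rw [abs_lt]
    constructor <;> nlinarith
  · nlinarith
  · nlinarith
end

section
/- Let ω > 0, λ > 0 and ξ ∈ ℝ satisfy q := 4λ²sin²(ξ/2) = 2ω/(1 + ω), and let G be the 4 × 4 complex matrix with rows (1, −λ(e^{iξ} − 1), 0, 0), (0, (2 − q(1 + ω))/(1 + ω), (1 + ω)/(1 + ω), 2ω/(1 + ω)), (0, 1, 0, 0), (−λ(1 − e^{−iξ}), −q, 0, 1). Then the powers of G are not uniformly bounded: there is no constant C with ‖Gⁿ‖ ≤ C for all n. -/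
attribute [local instance] Matrix.frobeniusNormedAddCommGroup

/-!
The corner entries `u = -λ(e^{iξ} - 1)` and `v = -λ(1 - e^{-iξ})` of `G` satisfy
`u v = -4λ² sin²(ξ/2) = -q`, and with this the characteristic polynomial of `G` is
`p(x) = x (x - 1)² (x - a) - (x - 1)² + c q x²`, where `a` and `c = 2ω/(1+ω)` are entries of the
second row. As `p(0) = -1 < 0 < c q = p(1)`, `p` has a root in `(0, 1)`, while its four roots
multiply to `p(0) = -1`; so some eigenvalue `μ` of `G` has `|μ| > 1`. On an eigenvector `Gⁿ` acts
as `μⁿ`, and the Frobenius norm is submultiplicative, hence `‖Gⁿ‖ ≥ |μ|ⁿ`.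
-/

open Polynomial Matrix

theorem Polynomial.exists_one_lt_norm_mem_roots {K : Type*} [NormedField K] [IsAlgClosed K]
    {P : K[X]} (hP : P.Monic) {r : K} (hr : r ∈ P.roots) (hlt : ‖r‖ < ‖P.coeff 0‖) :
    ∃ z ∈ P.roots, 1 < ‖z‖ := by
  classical
  by_contra! hle
  have hprod : ‖P.roots.prod‖ ≤ ‖r‖ := by
    rw [← Multiset.cons_erase hr, Multiset.prod_cons, norm_mul]
    refine mul_le_of_le_one_right (norm_nonneg r) ?_
    rw [← normHom_apply, map_multiset_prod]
    simpa using Multiset.prod_map_le_pow_card (f := normHom) (r := (1 : ℝ))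
      (fun z _ => norm_nonneg z) fun z hz => hle z (Multiset.mem_of_mem_erase hz)
  rw [(IsAlgClosed.splits P).coeff_zero_eq_prod_roots_of_monic hP, norm_mul, norm_pow, norm_neg,
    norm_one, one_pow, one_mul] at hlt
  exact hlt.not_ge hprod

namespace Matrix

variable {n : Type*} [Fintype n] [DecidableEq n]

theorem exists_mulVec_eq_smul_of_isRoot_charpoly {K : Type*} [Field K] (A : Matrix n n K) {μ : K}
    (hμ : A.charpoly.IsRoot μ) : ∃ v ≠ 0, A *ᵥ v = μ • v := by
  rw [IsRoot, eval_charpoly, ← exists_mulVec_eq_zero_iff] at hμ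
  obtain ⟨v, hv, hker⟩ := hμ
  rw [sub_mulVec, sub_eq_zero, scalar_apply, ← smul_one_eq_diagonal, smul_mulVec, one_mulVec]
    at hker
  exact ⟨v, hv, hker.symm⟩

theorem pow_mulVec_eq_pow_smul {R : Type*} [CommRing R] (A : Matrix n n R) {μ : R} {v : n → R}
    (hAv : A *ᵥ v = μ • v) (k : ℕ) : A ^ k *ᵥ v = μ ^ k • v := by
  induction k with
  | zero => simp
  | succ k ih => rw [pow_succ', ← mulVec_mulVec, ih, mulVec_smul, hAv, smul_smul, pow_succ]

theorem not_exists_frobenius_norm_pow_le_of_isRoot_charpoly {𝕜 : Type*} [RCLike 𝕜]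
    (A : Matrix n n 𝕜) {μ : 𝕜} (hμ : A.charpoly.IsRoot μ) (hμ1 : 1 < ‖μ‖) :
    ¬ ∃ C, ∀ k : ℕ, ‖A ^ k‖ ≤ C := by
  rintro ⟨C, hC⟩
  obtain ⟨v, hv, hAv⟩ := A.exists_mulVec_eq_smul_of_isRoot_charpoly hμ
  have hv' : 0 < ‖WithLp.toLp 2 v‖ := by simpa using hv
  obtain ⟨k, hk⟩ := pow_unbounded_of_one_lt C hμ1
  have hle : ‖μ‖ ^ k * ‖WithLp.toLp 2 v‖ ≤ C * ‖WithLp.toLp 2 v‖ :=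
    calc ‖μ‖ ^ k * ‖WithLp.toLp 2 v‖ = ‖A ^ k * replicateCol Unit v‖ := by
          rw [← replicateCol_mulVec, A.pow_mulVec_eq_pow_smul hAv, frobenius_norm_replicateCol,
            WithLp.toLp_smul, norm_smul, norm_pow]
      _ ≤ ‖A ^ k‖ * ‖replicateCol Unit v‖ := frobenius_norm_mul _ _
      _ ≤ C * ‖WithLp.toLp 2 v‖ := by rw [frobenius_norm_replicateCol]; gcongr; exact hC k
  exact hk.not_ge (le_of_mul_le_mul_right hle hv')

end Matrix

theorem Complex.exp_mul_I_sub_one_mul_one_sub_exp_neg_mul_I (ξ : ℝ) :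
    (exp (ξ * I) - 1) * (1 - exp (-ξ * I)) = -4 * sin (ξ / 2) ^ 2 := by
  have hcos : cos ξ = 2 * cos (ξ / 2) ^ 2 - 1 := by rw [← cos_two_mul]; ring_nf
  rw [exp_mul_I, exp_mul_I, cos_neg, sin_neg]
  linear_combination 2 * hcos - sin_sq_add_cos_sq (ξ : ℂ) + 4 * sin_sq_add_cos_sq ((ξ : ℂ) / 2) +
    sin (ξ : ℂ) ^ 2 * I_sq

def lorentzJosephMatrix {R : Type*} [CommRing R] (u v a b c q : R) : Matrix (Fin 4) (Fin 4) R :=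
  !![1, u, 0, 0; 0, a, b, c; 0, 1, 0, 0; v, -q, 0, 1]

theorem eval_charpoly_lorentzJosephMatrix {R : Type*} [CommRing R] {u v q : R} (a b c x : R)
    (huv : u * v = -q) :
    (lorentzJosephMatrix u v a b c q).charpoly.eval x
      = x * (x - 1) ^ 2 * (x - a) - b * (x - 1) ^ 2 + c * q * x ^ 2 := by
  rw [eval_charpoly, det_succ_row_zero]
  simp [lorentzJosephMatrix, Fin.sum_univ_four, det_fin_three, Fin.succAbove]
  linear_combination (-c * x) * huv

theorem exists_mem_Ioo_zero_one_root (a b k : ℝ) (hb : 0 < b) (hk : 0 < k) :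
    ∃ r ∈ Set.Ioo (0 : ℝ) 1, r * (r - 1) ^ 2 * (r - a) - b * (r - 1) ^ 2 + k * r ^ 2 = 0 :=
  intermediate_value_Ioo zero_le_one (by fun_prop) (by constructor <;> norm_num [hb, hk])

theorem exists_isRoot_charpoly_lorentzJosephMatrix_one_lt_norm {u v : ℂ} {q : ℝ} (a c : ℝ)
    (huv : u * v = -q) (hc : 0 < c) (hq : 0 < q) :
    ∃ μ : ℂ, (lorentzJosephMatrix u v a 1 c q).charpoly.IsRoot μ ∧ 1 < ‖μ‖ := by
  have hchar := fun x => eval_charpoly_lorentzJosephMatrix (a : ℂ) 1 (c : ℂ) x huv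
  obtain ⟨r, ⟨hr0, hr1⟩, hr⟩ := exists_mem_Ioo_zero_one_root a 1 (c * q) one_pos (by positivity)
  have hroot : (r : ℂ) ∈ _ := (mem_roots (charpoly_monic _).ne_zero).mpr (by
    rw [IsRoot, hchar]; exact_mod_cast hr)
  obtain ⟨μ, hμ, hμ1⟩ := exists_one_lt_norm_mem_roots (charpoly_monic _) hroot (by
    rw [coeff_zero_eq_eval_zero, hchar]; simpa [abs_of_pos hr0] using hr1)
  exact ⟨μ, isRoot_of_mem_roots hμ, hμ1⟩

theorem lorentz_joseph_unstable_general (ω lam ξ q : ℝ) (hω : 0 < ω)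
    (hq : q = 4 * lam ^ 2 * Real.sin (ξ / 2) ^ 2) (hqres : q = 2 * ω / (1 + ω)) :
    ¬ ∃ C : ℝ, ∀ n : ℕ,
      ‖(!![1, -(lam : ℂ) * (Complex.exp (ξ * Complex.I) - 1), 0, 0;
          0, (2 - (q : ℂ) * (1 + (ω : ℂ))) / (1 + (ω : ℂ)),
            (1 + (ω : ℂ)) / (1 + (ω : ℂ)), 2 * (ω : ℂ) / (1 + (ω : ℂ));
          0, 1, 0, 0;
          -(lam : ℂ) * (1 - Complex.exp (-ξ * Complex.I)), -(q : ℂ), 0, 1] :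
            Matrix (Fin 4) (Fin 4) ℂ) ^ n‖ ≤ C := by
  have huv : -(lam : ℂ) * (Complex.exp (ξ * Complex.I) - 1) *
      (-(lam : ℂ) * (1 - Complex.exp (-ξ * Complex.I))) = -(q : ℂ) := by
    rw [hq]
    push_cast
    linear_combination (lam : ℂ) ^ 2 * Complex.exp_mul_I_sub_one_mul_one_sub_exp_neg_mul_I ξ
  obtain ⟨μ, hμ, hμ1⟩ := exists_isRoot_charpoly_lorentzJosephMatrix_one_lt_norm
    ((2 - q * (1 + ω)) / (1 + ω)) (2 * ω / (1 + ω)) huv (by positivity) (hqres ▸ by positivity)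
  have hω1 : (1 + ω : ℂ) ≠ 0 := by exact_mod_cast (by positivity : (1 + ω : ℝ) ≠ 0)
  rw [div_self hω1]
  push_cast at hμ
  exact not_exists_frobenius_norm_pow_le_of_isRoot_charpoly _ hμ hμ1

/-- Instability of the Lorentz–Joseph et al. amplification matrix in the
harmonic case `ν = 0` with `ε_s = ε_∞`, at the resonant value
`q = 4λ²sin²(ξ/2) = 2ω/(1+ω)`: the powers of `G` are not uniformly bounded. -/
theorem lorentz_joseph_unstable (ω lam ξ q : ℝ) (hω : 0 < ω) (hlam : 0 < lam)
    (hq : q = 4 * lam ^ 2 * Real.sin (ξ / 2) ^ 2) (hqres : q = 2 * ω / (1 + ω)) :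
    ¬ ∃ C : ℝ, ∀ n : ℕ,
      ‖(!![1, -(lam : ℂ) * (Complex.exp (ξ * Complex.I) - 1), 0, 0;
          0, (2 - (q : ℂ) * (1 + (ω : ℂ))) / (1 + (ω : ℂ)),
            (1 + (ω : ℂ)) / (1 + (ω : ℂ)), 2 * (ω : ℂ) / (1 + (ω : ℂ));
          0, 1, 0, 0;
          -(lam : ℂ) * (1 - Complex.exp (-ξ * Complex.I)), -(q : ℂ), 0, 1] :
            Matrix (Fin 4) (Fin 4) ℂ) ^ n‖ ≤ C :=
  lorentz_joseph_unstable_general ω lam ξ q hω hq hqres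
end

section
/- Let δ > 0, ω > 0, ε′ > 1 and 0 < q < 4 be real numbers. Then the Lorentz–Kashiwa et al. characteristic polynomial φ₀(Z) = (1 + δ + ωε′/2)Z⁴ − (4 + 2δ − (1 + δ + ω/2)q)Z³ + (6 − ωε′ + (ω − 2)q)Z² − (4 − 2δ − (1 − δ + ω/2)q)Z + (1 − δ + ωε′/2) is a Schur polynomial. -/
/-!
The Cayley map `z ↦ w = (z + 1) / (z - 1)` sends the exterior `1 ≤ ‖z‖` of the open unit disk onto
the closed right half plane, and turns `φ₀` into the real quartic
`ψ(w) = 2ωq w⁴ + 4δq w³ + (8ωε′ + 4q - 2ωq) w² + (16δ - 4δq) w + (16 - 4q)`, with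
`(z - 1)⁴ ψ(w) = 16 φ₀(z)`. The coefficients of `ψ` are positive and its Hurwitz determinant
`b₁b₂b₃ - b₃²b₀ - b₄b₁²` equals `128 δ² q (4 - q) ω (ε′ - 1) > 0`, so by the Routh–Hurwitz criterion
`ψ` has no root with `0 ≤ re w`.
-/

open Polynomial

open Complex ComplexConjugate

section Hurwitz

variable {b₄ b₃ b₂ b₁ b₀ : ℝ}

/-- What remains of `re ψ(x + iy) = 0` after eliminating `y²` with `im ψ(x + iy) = 0`, `y ≠ 0`. -/
def quarticEliminant (b₄ b₃ b₂ b₁ b₀ x : ℝ) : ℝ :=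
  (b₁ * b₂ * b₃ - b₃ ^ 2 * b₀ - b₄ * b₁ ^ 2)
    + x * (2 * b₃ * (b₂ ^ 2 - 4 * b₄ * b₀) + 2 * b₃ ^ 2 * b₁)
    + x ^ 2 * (8 * b₃ ^ 2 * b₂ + 4 * b₄ * (b₂ ^ 2 - 4 * b₄ * b₀) + 4 * b₄ * b₃ * b₁)
    + x ^ 3 * (8 * b₃ ^ 3 + 32 * b₄ * b₃ * b₂)
    + x ^ 4 * (48 * b₄ * b₃ ^ 2 + 32 * b₄ ^ 2 * b₂)
    + x ^ 5 * (96 * b₄ ^ 2 * b₃) + x ^ 6 * (64 * b₄ ^ 3)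

lemma four_mul_mul_lt_sq_of_hurwitz (h₄ : 0 < b₄) (h₃ : 0 < b₃) (h₁ : 0 < b₁) (h₀ : 0 < b₀)
    (hH : b₃ ^ 2 * b₀ + b₄ * b₁ ^ 2 < b₁ * b₂ * b₃) :
    4 * b₄ * b₀ < b₂ ^ 2 := by
  have hsq : (b₃ ^ 2 * b₀ + b₄ * b₁ ^ 2) ^ 2 < (b₁ * b₂ * b₃) ^ 2 := by
    have : 0 < b₃ ^ 2 * b₀ + b₄ * b₁ ^ 2 := by positivity
    nlinarith
  -- AM–GM: `4 (b₃²b₀)(b₄b₁²) ≤ (b₃²b₀ + b₄b₁²)²`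
  have hamgm := sq_nonneg (b₃ ^ 2 * b₀ - b₄ * b₁ ^ 2)
  have hb : (0 : ℝ) < (b₁ * b₃) ^ 2 := by positivity
  nlinarith

lemma quarticEliminant_pos (h₄ : 0 < b₄) (h₃ : 0 < b₃) (h₂ : 0 < b₂) (h₁ : 0 < b₁)
    (h₀ : 0 < b₀) (hH : b₃ ^ 2 * b₀ + b₄ * b₁ ^ 2 < b₁ * b₂ * b₃) {x : ℝ} (hx : 0 ≤ x) :
    0 < quarticEliminant b₄ b₃ b₂ b₁ b₀ x := by
  have hdisc : 0 ≤ b₂ ^ 2 - 4 * b₄ * b₀ := by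
    linarith [four_mul_mul_lt_sq_of_hurwitz h₄ h₃ h₁ h₀ hH]
  have hconst : 0 < b₁ * b₂ * b₃ - b₃ ^ 2 * b₀ - b₄ * b₁ ^ 2 := by linarith
  unfold quarticEliminant
  positivity

theorem quartic_ne_zero_of_hurwitz (h₄ : 0 < b₄) (h₃ : 0 < b₃) (h₂ : 0 < b₂) (h₁ : 0 < b₁)
    (h₀ : 0 < b₀) (hH : b₃ ^ 2 * b₀ + b₄ * b₁ ^ 2 < b₁ * b₂ * b₃) {w : ℂ} (hw : 0 ≤ w.re) :
    (b₄ : ℂ) * w ^ 4 + b₃ * w ^ 3 + b₂ * w ^ 2 + b₁ * w + b₀ ≠ 0 := by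
  obtain ⟨x, y, rfl⟩ : ∃ x y : ℝ, w = x + y * I := ⟨w.re, w.im, (re_add_im w).symm⟩
  simp only [add_re, ofReal_re, mul_re, I_re, mul_zero, ofReal_im, I_im, mul_one, sub_self,
    add_zero] at hw
  intro hψ
  obtain ⟨hre, him⟩ := Complex.ext_iff.mp hψ
  simp only [add_re, add_im, mul_re, mul_im, ofReal_re, ofReal_im, I_re, I_im, pow_succ,
    pow_zero, one_re, one_im, zero_re, zero_im] at hre him
  rcases eq_or_ne y 0 with rfl | hy
  · have : 0 < b₄ * x ^ 4 + b₃ * x ^ 3 + b₂ * x ^ 2 + b₁ * x + b₀ := by positivity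
    nlinarith
  · have hy2 : y ^ 2 * (4 * b₄ * x + b₃) = 4 * b₄ * x ^ 3 + 3 * b₃ * x ^ 2 + 2 * b₂ * x + b₁ := by
      apply mul_left_cancel₀ hy
      linear_combination -him
    have : quarticEliminant b₄ b₃ b₂ b₁ b₀ x = 0 := by
      unfold quarticEliminant
      linear_combination (-(4 * b₄ * x + b₃) ^ 2) * hre - (b₄ * (6 * x ^ 2 * (4 * b₄ * x + b₃)
        - (y ^ 2 * (4 * b₄ * x + b₃) + (4 * b₄ * x ^ 3 + 3 * b₃ * x ^ 2 + 2 * b₂ * x + b₁)))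
        + 3 * b₃ * x * (4 * b₄ * x + b₃) + b₂ * (4 * b₄ * x + b₃)) * hy2
    exact (quarticEliminant_pos h₄ h₃ h₂ h₁ h₀ hH hw).ne' this

end Hurwitz

lemma re_div_sub_one_nonneg {z : ℂ} (hz : 1 ≤ ‖z‖) : 0 ≤ ((z + 1) / (z - 1)).re := by
  have hnum : ((z + 1) * conj (z - 1)).re = ‖z‖ ^ 2 - 1 := by
    rw [← normSq_eq_norm_sq, normSq_apply]
    simp only [mul_re, add_re, add_im, conj_re, conj_im, sub_re, sub_im, one_re, one_im]
    ring
  rw [div_eq_mul_inv, inv_def, ← mul_assoc, re_mul_ofReal, hnum]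
  have : 1 ≤ ‖z‖ ^ 2 := by nlinarith
  exact mul_nonneg (by linarith) (inv_nonneg.mpr (normSq_nonneg _))

lemma kashiwa_charpoly_cayley (δ ω ε' q : ℝ) {z : ℂ} (hz : z ≠ 1) :
    16 * (((1 + δ + ω * ε' / 2 : ℝ) : ℂ) * z ^ 4
      - ((4 + 2 * δ - (1 + δ + ω / 2) * q : ℝ) : ℂ) * z ^ 3
      + ((6 - ω * ε' + (ω - 2) * q : ℝ) : ℂ) * z ^ 2
      - ((4 - 2 * δ - (1 - δ + ω / 2) * q : ℝ) : ℂ) * z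
      + ((1 - δ + ω * ε' / 2 : ℝ) : ℂ))
    = (z - 1) ^ 4 * (((2 * ω * q : ℝ) : ℂ) * ((z + 1) / (z - 1)) ^ 4
      + ((4 * δ * q : ℝ) : ℂ) * ((z + 1) / (z - 1)) ^ 3
      + ((8 * ω * ε' + 4 * q - 2 * ω * q : ℝ) : ℂ) * ((z + 1) / (z - 1)) ^ 2
      + ((16 * δ - 4 * δ * q : ℝ) : ℂ) * ((z + 1) / (z - 1))
      + ((16 - 4 * q : ℝ) : ℂ)) := by
  have : z - 1 ≠ 0 := sub_ne_zero.mpr hz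
  field_simp
  push_cast
  ring

/-- Lorentz–Kashiwa et al. (an-harmonic case): for `δ > 0`, `ω > 0`, `ε′ > 1` and
`0 < q < 4` the characteristic polynomial is a Schur polynomial. -/
theorem lorentz_kashiwa_schur (δ ω ε' q : ℝ) (hδ : 0 < δ) (hω : 0 < ω)
    (hε : 1 < ε') (hq0 : 0 < q) (hq4 : q < 4) :
    IsSchur (Polynomial.C ((1 + δ + ω * ε' / 2 : ℝ) : ℂ) * Polynomial.X ^ 4
      - Polynomial.C ((4 + 2 * δ - (1 + δ + ω / 2) * q : ℝ) : ℂ) * Polynomial.X ^ 3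
      + Polynomial.C ((6 - ω * ε' + (ω - 2) * q : ℝ) : ℂ) * Polynomial.X ^ 2
      - Polynomial.C ((4 - 2 * δ - (1 - δ + ω / 2) * q : ℝ) : ℂ) * Polynomial.X
      + Polynomial.C ((1 - δ + ω * ε' / 2 : ℝ) : ℂ)) := by
  intro z hz
  by_contra! hz_out
  simp only [IsRoot.def, eval_add, eval_sub, eval_mul, eval_pow, eval_C, eval_X] at hz
  have hz1 : z ≠ 1 := by
    rintro rfl
    have : ((2 * ω * q : ℝ) : ℂ) = 0 := by push_cast at hz ⊢; linear_combination hz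
    exact (by positivity : (0 : ℝ) < 2 * ω * q).ne' (by exact_mod_cast this)
  have hψ := kashiwa_charpoly_cayley δ ω ε' q hz1
  rw [hz, mul_zero, eq_comm, mul_eq_zero, or_iff_right (pow_ne_zero 4 (sub_ne_zero.mpr hz1))]
    at hψ
  have hq : 0 < 4 - q := by linarith
  have hε' : 0 < ε' - 1 := by linarith
  refine quartic_ne_zero_of_hurwitz (by positivity) (by positivity) ?_ (by nlinarith)
    (by linarith) ?_ (re_div_sub_one_nonneg hz_out) hψ
  · nlinarith [mul_pos hω hε', mul_pos hω hq]
  · have hdet : (16 * δ - 4 * δ * q) * (8 * ω * ε' + 4 * q - 2 * ω * q) * (4 * δ * q)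
        - (4 * δ * q) ^ 2 * (16 - 4 * q) - 2 * ω * q * (16 * δ - 4 * δ * q) ^ 2
        = 128 * δ ^ 2 * q * (4 - q) * ω * (ε' - 1) := by ring
    have : 0 < 128 * δ ^ 2 * q * (4 - q) * ω * (ε' - 1) := by positivity
    linarith
end

section
/- Let δ ≥ 0, ω > 0, α ≥ 0, λ > 0 and ξ ∈ ℝ satisfy q := 4λ²sin²(ξ/2) = 4. Set ε′ = 1 + α and Δ = 1 + δ + ωε′/2, and let G be the 4 × 4 complex matrix with rows (1, −λ(e^{iξ} − 1), 0, 0), (−λ(1 − e^{−iξ})(Δ − ωα/2)/Δ, (Δ − qΔ − (2 − q)ωα/2)/Δ, ω/Δ, −1/Δ), (−λ(1 − e^{−iξ})ωα/(2Δ), (2 − q)ωα/(2Δ), (Δ − ω)/Δ, 1/Δ), (−λ(1 − e^{−iξ})ωα/Δ, (2 − q)ωα/Δ, −2ω/Δ, (2 − Δ)/Δ). Then the powers of G are not uniformly bounded: there is no constant C with ‖Gⁿ‖ ≤ C for all n. -/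
/-!
At `q = 4` the symbols `a = λ(e^{iξ} - 1)` and `b = λ(1 - e^{-iξ})` satisfy `ab = -q = -4`,
and this makes `-1` a defective eigenvalue of `G`: with `v = (a, 2, 0, 0)` and
`w = (a/2, 0, 0, -ωα)` one has `Gv = -v` and `Gw = -w + v`. Hence
`Gⁿw = (-1)ⁿ(w - n v)`, whose norm grows linearly in `n`, while `‖Gⁿw‖ ≤ ‖Gⁿ‖ ‖w‖`.
-/

attribute [local instance] Matrix.frobeniusNormedAddCommGroup

open WithLp

namespace Matrix

variable {m n : Type*} [Fintype m] [Fintype n]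

theorem frobenius_norm_toLp_mulVec_le {𝕜 : Type*} [RCLike 𝕜] (A : Matrix m n 𝕜) (v : n → 𝕜) :
    ‖toLp 2 (A *ᵥ v)‖ ≤ ‖A‖ * ‖toLp 2 v‖ := by
  simpa [← replicateCol_mulVec] using frobenius_norm_mul A (replicateCol Unit v)

theorem smul_pow_mulVec_of_jordan_chain {R : Type*} [CommRing R] [DecidableEq n]
    {A : Matrix n n R} {μ : R} {v w : n → R} (hv : A *ᵥ v = μ • v) (hw : A *ᵥ w = μ • w + v)
    (k : ℕ) : μ • (A ^ k *ᵥ w) = μ ^ k • (μ • w + (k : R) • v) := by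
  induction k with
  | zero => simp
  | succ k ih =>
    rw [pow_succ', ← mulVec_mulVec, ← mulVec_smul, ih, mulVec_smul, mulVec_add, mulVec_smul,
      mulVec_smul, hv, hw]
    push_cast
    module

theorem not_exists_norm_pow_le_of_jordan_chain {𝕜 : Type*} [RCLike 𝕜] [DecidableEq n]
    {A : Matrix n n 𝕜} {μ : 𝕜} {v w : n → 𝕜} (hμ : ‖μ‖ = 1) (hv0 : v ≠ 0)
    (hv : A *ᵥ v = μ • v) (hw : A *ᵥ w = μ • w + v) :
    ¬ ∃ C, ∀ k : ℕ, ‖A ^ k‖ ≤ C := by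
  rintro ⟨C, hC⟩
  have hv0' : 0 < ‖toLp 2 v‖ := norm_pos_iff.2 (by simpa using hv0)
  have growth (k : ℕ) : k * ‖toLp 2 v‖ - ‖toLp 2 w‖ ≤ C * ‖toLp 2 w‖ :=
    calc k * ‖toLp 2 v‖ - ‖toLp 2 w‖ = ‖toLp 2 ((k : 𝕜) • v)‖ - ‖toLp 2 (μ • w)‖ := by
          simp [toLp_smul, norm_smul, hμ]
      _ ≤ ‖toLp 2 (μ • w + (k : 𝕜) • v)‖ := by
          rw [toLp_add, add_comm]; exact norm_sub_le_norm_add _ _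
      _ = ‖toLp 2 (μ ^ k • (μ • w + (k : 𝕜) • v))‖ := by
          rw [toLp_smul, norm_smul, norm_pow, hμ, one_pow, one_mul]
      _ = ‖toLp 2 (A ^ k *ᵥ w)‖ := by
          rw [← smul_pow_mulVec_of_jordan_chain hv hw, toLp_smul, norm_smul, hμ, one_mul]
      _ ≤ ‖A ^ k‖ * ‖toLp 2 w‖ := frobenius_norm_toLp_mulVec_le _ _
      _ ≤ C * ‖toLp 2 w‖ := by gcongr; exact hC k
  obtain ⟨k, hk⟩ := exists_nat_gt ((C + 1) * ‖toLp 2 w‖ / ‖toLp 2 v‖)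
  rw [div_lt_iff₀ hv0'] at hk
  linarith [growth k]

end Matrix

open Complex Matrix

theorem lam_exp_sub_one_mul_lam_one_sub_exp_neg (lam ξ : ℝ) :
    lam * (exp (ξ * I) - 1) * (lam * (1 - exp (-ξ * I))) =
      -(4 * lam ^ 2 * Real.sin (ξ / 2) ^ 2 : ℝ) := by
  have hprod : exp (ξ * I) * exp (-ξ * I) = 1 := by rw [← exp_add]; simp
  have hsum : exp (ξ * I) + exp (-ξ * I) = 2 * cos ξ := by rw [cos, neg_mul]; ring
  have hcos : cos ξ = 1 - 2 * sin (ξ / 2) ^ 2 := by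
    rw [← cos_two_mul_eq_one_sub, mul_div_cancel₀ _ two_ne_zero]
  push_cast
  linear_combination (lam : ℂ) ^ 2 * (hsum - hprod + 2 * hcos)

noncomputable def kashiwaMatrix (lam ξ q Δ ω α : ℝ) : Matrix (Fin 4) (Fin 4) ℂ :=
  !![1, -(lam : ℂ) * (exp (ξ * I) - 1), 0, 0;
    -(lam : ℂ) * (1 - exp (-ξ * I)) * ((Δ : ℂ) - ω * α / 2) / Δ,
      ((Δ : ℂ) - q * Δ - (2 - (q : ℂ)) * ω * α / 2) / Δ, (ω : ℂ) / Δ, -1 / (Δ : ℂ);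
    -(lam : ℂ) * (1 - exp (-ξ * I)) * ω * α / (2 * Δ),
      (2 - (q : ℂ)) * ω * α / (2 * Δ), ((Δ : ℂ) - ω) / Δ, 1 / (Δ : ℂ);
    -(lam : ℂ) * (1 - exp (-ξ * I)) * ω * α / Δ,
      (2 - (q : ℂ)) * ω * α / Δ, -2 * (ω : ℂ) / Δ, (2 - (Δ : ℂ)) / Δ]

namespace kashiwaMatrix

variable {lam ξ q Δ ω α : ℝ}

theorem mulVec_eigenvector (hq : q = 4 * lam ^ 2 * Real.sin (ξ / 2) ^ 2) (hq4 : q = 4)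
    (hΔ : Δ ≠ 0) :
    kashiwaMatrix lam ξ q Δ ω α *ᵥ ![lam * (exp (ξ * I) - 1), 2, 0, 0] =
      (-1 : ℂ) • ![lam * (exp (ξ * I) - 1), 2, 0, 0] := by
  have hab := lam_exp_sub_one_mul_lam_one_sub_exp_neg lam ξ
  rw [← hq, hq4, ofReal_ofNat, neg_mul] at hab
  have hΔ' : (Δ : ℂ) ≠ 0 := ofReal_ne_zero.mpr hΔ
  subst hq4
  ext i
  fin_cases i <;> simp [kashiwaMatrix, ofReal_ofNat] <;> field_simp
  · ring
  · linear_combination (ω * α - 2 * Δ : ℂ) * hab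
  · linear_combination (-(ω * α) : ℂ) * hab
  · linear_combination (-(ω * α) : ℂ) * hab

theorem mulVec_generalizedEigenvector (hq : q = 4 * lam ^ 2 * Real.sin (ξ / 2) ^ 2)
    (hq4 : q = 4) (hΔ : Δ ≠ 0) :
    kashiwaMatrix lam ξ q Δ ω α *ᵥ ![lam * (exp (ξ * I) - 1) / 2, 0, 0, -(ω * α)] =
      (-1 : ℂ) • ![lam * (exp (ξ * I) - 1) / 2, 0, 0, -(ω * α)] +
        ![lam * (exp (ξ * I) - 1), 2, 0, 0] := by
  have hab := lam_exp_sub_one_mul_lam_one_sub_exp_neg lam ξ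
  rw [← hq, hq4, ofReal_ofNat, neg_mul] at hab
  have hΔ' : (Δ : ℂ) ≠ 0 := ofReal_ne_zero.mpr hΔ
  subst hq4
  ext i
  fin_cases i <;> simp [kashiwaMatrix, ofReal_ofNat] <;> field_simp
  · ring
  · linear_combination (ω * α - 2 * Δ : ℂ) * hab
  · linear_combination (-(ω * α) : ℂ) * hab
  · linear_combination (-(ω * α) : ℂ) * hab

end kashiwaMatrix

theorem lorentz_kashiwa_unstable_general (δ ω α lam ξ q ε' Δ : ℝ)
    (hδ : 0 ≤ δ) (hω : 0 < ω) (hα : 0 ≤ α)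
    (hq : q = 4 * lam ^ 2 * Real.sin (ξ / 2) ^ 2) (hq4 : q = 4)
    (hε : ε' = 1 + α) (hΔ : Δ = 1 + δ + ω * ε' / 2) :
    ¬ ∃ C : ℝ, ∀ n : ℕ,
      ‖(!![1, -(lam : ℂ) * (Complex.exp (ξ * Complex.I) - 1), 0, 0;
          -(lam : ℂ) * (1 - Complex.exp (-ξ * Complex.I)) *
              ((Δ : ℂ) - (ω : ℂ) * (α : ℂ) / 2) / (Δ : ℂ),
            ((Δ : ℂ) - (q : ℂ) * (Δ : ℂ) - (2 - (q : ℂ)) * (ω : ℂ) * (α : ℂ) / 2) / (Δ : ℂ),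
            (ω : ℂ) / (Δ : ℂ), -1 / (Δ : ℂ);
          -(lam : ℂ) * (1 - Complex.exp (-ξ * Complex.I)) * (ω : ℂ) * (α : ℂ) /
              (2 * (Δ : ℂ)),
            (2 - (q : ℂ)) * (ω : ℂ) * (α : ℂ) / (2 * (Δ : ℂ)),
            ((Δ : ℂ) - (ω : ℂ)) / (Δ : ℂ), 1 / (Δ : ℂ);
          -(lam : ℂ) * (1 - Complex.exp (-ξ * Complex.I)) * (ω : ℂ) * (α : ℂ) / (Δ : ℂ),
            (2 - (q : ℂ)) * (ω : ℂ) * (α : ℂ) / (Δ : ℂ),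
            -2 * (ω : ℂ) / (Δ : ℂ), (2 - (Δ : ℂ)) / (Δ : ℂ)] :
            Matrix (Fin 4) (Fin 4) ℂ) ^ n‖ ≤ C := by
  have hΔ0 : Δ ≠ 0 := by rw [hΔ, hε]; positivity
  have hv0 : ![(lam : ℂ) * (exp (ξ * I) - 1), 2, 0, 0] ≠ 0 := fun h => by
    simpa using congrFun h 1
  exact Matrix.not_exists_norm_pow_le_of_jordan_chain (by simp) hv0
    (kashiwaMatrix.mulVec_eigenvector hq hq4 hΔ0)
    (kashiwaMatrix.mulVec_generalizedEigenvector hq hq4 hΔ0)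

/-- Instability of the Lorentz–Kashiwa et al. amplification matrix at the limit
CFL value `q = 4λ²sin²(ξ/2) = 4`, with `ε′ = 1 + α` and `Δ = 1 + δ + ωε′/2`:
the powers of `G` are not uniformly bounded. -/
theorem lorentz_kashiwa_unstable (δ ω α lam ξ q ε' Δ : ℝ)
    (hδ : 0 ≤ δ) (hω : 0 < ω) (hα : 0 ≤ α) (hlam : 0 < lam)
    (hq : q = 4 * lam ^ 2 * Real.sin (ξ / 2) ^ 2) (hq4 : q = 4)
    (hε : ε' = 1 + α) (hΔ : Δ = 1 + δ + ω * ε' / 2) :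
    ¬ ∃ C : ℝ, ∀ n : ℕ,
      ‖(!![1, -(lam : ℂ) * (Complex.exp (ξ * Complex.I) - 1), 0, 0;
          -(lam : ℂ) * (1 - Complex.exp (-ξ * Complex.I)) *
              ((Δ : ℂ) - (ω : ℂ) * (α : ℂ) / 2) / (Δ : ℂ),
            ((Δ : ℂ) - (q : ℂ) * (Δ : ℂ) - (2 - (q : ℂ)) * (ω : ℂ) * (α : ℂ) / 2) / (Δ : ℂ),
            (ω : ℂ) / (Δ : ℂ), -1 / (Δ : ℂ);
          -(lam : ℂ) * (1 - Complex.exp (-ξ * Complex.I)) * (ω : ℂ) * (α : ℂ) /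
              (2 * (Δ : ℂ)),
            (2 - (q : ℂ)) * (ω : ℂ) * (α : ℂ) / (2 * (Δ : ℂ)),
            ((Δ : ℂ) - (ω : ℂ)) / (Δ : ℂ), 1 / (Δ : ℂ);
          -(lam : ℂ) * (1 - Complex.exp (-ξ * Complex.I)) * (ω : ℂ) * (α : ℂ) / (Δ : ℂ),
            (2 - (q : ℂ)) * (ω : ℂ) * (α : ℂ) / (Δ : ℂ),
            -2 * (ω : ℂ) / (Δ : ℂ), (2 - (Δ : ℂ)) / (Δ : ℂ)] :
            Matrix (Fin 4) (Fin 4) ℂ) ^ n‖ ≤ C :=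
  lorentz_kashiwa_unstable_general δ ω α lam ξ q ε' Δ hδ hω hα hq hq4 hε hΔ
end
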